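/- arXiv:2201.09688 — 7 statements merged into one kernel-verified Lean document; each statement's English description precedes it below -/
import Mathlib

section
/- Let E be a field of characteristic p and M an E-vector space with a valuation val_M satisfying val_M(xm) = val_M(m) for x in E^×, separated and complete. If a sequence (m_n) in M tends to 0, then the function f : Z_p → M defined by f(z) = Σ_{n≥0} C(z,n)·m_n (where C(z,n) is the binomial coefficient reduced mod p, viewed in F_p ⊂ E) is continuous, and inf_{z∈Z_p} val_M(f(z)) = inf_{n≥0} val_M(m_n). -/
open Filter Topology

/-- The binomial coefficient `C(z,n)` of a `p`-adic integer `z`, reduced modulo `p` and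
viewed in the field `E` of characteristic `p` (via the prime field `𝔽_p ⊆ E`). -/
noncomputable def binomMod (p : ℕ) [Fact p.Prime] (E : Type*) [Field E] [CharP E p]
    (z : ℤ_[p]) (n : ℕ) : E :=
  ZMod.castHom dvd_rfl E (((z.appr (n + 1)).choose n : ZMod p))

/-!
The sets `{x | r ≤ v x}` are subgroups forming a basis of open, hence closed, neighbourhoods
of `0`. By Lucas's theorem `C(z, n) mod p` only depends on `z mod p ^ (n + 1)`, so for
`z ≡ z₀ mod p ^ N` the series for `f z - f z₀` only involves the small terms `m n` with `n ≥ N`;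
hence `f` is continuous. Every term `C(z, n) • m n` has valuation at least `inf v (m n)`, which
bounds `v (f z)` from below. Conversely, on natural numbers the series is a finite Newton
series, so `m n = Δⁿ f 0` is an integer combination of `f 0, …, f n`.
-/

open Finset
open scoped fwdDiff

theorem Choose.choose_modEq_choose_of_modEq_pow {p : ℕ} [Fact p.Prime] :
    ∀ {t a b j : ℕ}, j < p ^ t → a ≡ b [MOD p ^ t] → a.choose j ≡ b.choose j [MOD p]
  | 0, a, b, j, hj, _ => by
    rw [pow_zero, Nat.lt_one_iff] at hj
    rw [hj, Nat.choose_zero_right, Nat.choose_zero_right]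
  | t + 1, a, b, j, hj, hab => by
    rw [pow_succ'] at hj hab
    have hmod : a % p = b % p := hab.of_mul_right _
    have hdiv : a / p ≡ b / p [MOD p ^ t] := by
      simpa only [Nat.ModEq, Nat.mod_mul_right_div_self] using congrArg (· / p) hab
    calc a.choose j ≡ (a % p).choose (j % p) * (a / p).choose (j / p) [MOD p] :=
          choose_modEq_choose_mod_mul_choose_div_nat
      _ ≡ (b % p).choose (j % p) * (b / p).choose (j / p) [MOD p] := by
          rw [hmod]
          exact (choose_modEq_choose_of_modEq_pow (Nat.div_lt_of_lt_mul hj) hdiv).mul_left _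
      _ ≡ b.choose j [MOD p] := choose_modEq_choose_mod_mul_choose_div_nat.symm

namespace PadicInt

variable {p : ℕ} [Fact p.Prime]

theorem appr_modEq_of_sub_mem_span {z : ℤ_[p]} {n a : ℕ}
    (h : z - a ∈ Ideal.span {(p : ℤ_[p]) ^ n}) : z.appr n ≡ a [MOD p ^ n] :=
  (ZMod.natCast_eq_natCast_iff _ _ _).1 (zmod_congr_of_sub_mem_span n z _ _ (appr_spec n z) h)

theorem appr_eq_of_sub_mem_span {z z' : ℤ_[p]} {n N : ℕ} (hn : n ≤ N)
    (h : z - z' ∈ Ideal.span {(p : ℤ_[p]) ^ N}) : z.appr n = z'.appr n := by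
  have h' : z - z' ∈ Ideal.span {(p : ℤ_[p]) ^ n} :=
    Ideal.span_singleton_le_span_singleton.2 (pow_dvd_pow _ hn) h
  have hmem := Ideal.add_mem _ h' (appr_spec n z')
  rw [sub_add_sub_cancel] at hmem
  exact (appr_modEq_of_sub_mem_span hmem).eq_of_lt_of_lt (appr_lt z n) (appr_lt z' n)

end PadicInt

section binomMod

variable {p : ℕ} [hp : Fact p.Prime] {E : Type*} [Field E] [CharP E p]

theorem binomMod_eq_of_sub_mem_span {z z' : ℤ_[p]} {n N : ℕ} (hn : n < N)
    (h : z - z' ∈ Ideal.span {(p : ℤ_[p]) ^ N}) : binomMod p E z n = binomMod p E z' n := by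
  rw [binomMod, binomMod, PadicInt.appr_eq_of_sub_mem_span hn h]

theorem binomMod_natCast (k n : ℕ) : binomMod p E k n = k.choose n := by
  have hk : (k : ℤ_[p]).appr (n + 1) ≡ k [MOD p ^ (n + 1)] :=
    PadicInt.appr_modEq_of_sub_mem_span (by simp)
  have hn : n < p ^ (n + 1) :=
    (Nat.lt_pow_self hp.out.one_lt).trans (Nat.pow_lt_pow_succ hp.out.one_lt)
  rw [binomMod, (ZMod.natCast_eq_natCast_iff _ _ _).2
    (Choose.choose_modEq_choose_of_modEq_pow hn hk), map_natCast]

end binomMod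

theorem fwdDiff_iter_choose_smul_zero {G : Type*} [AddCommGroup G] (j n : ℕ) (x : G) :
    Δ_[1] ^[n] (fun k : ℕ ↦ k.choose j • x) 0 = if n = j then x else 0 := by
  calc Δ_[1] ^[n] (fun k : ℕ ↦ k.choose j • x) 0
      = (Δ_[1] ^[n] (fun k : ℕ ↦ (k.choose j : ℤ)) 0) • x := by
        simp only [fwdDiff_iter_eq_sum_shift, sum_smul, smul_assoc, natCast_zsmul]
    _ = if n = j then x else 0 := by
        rw [fwdDiff_iter_choose_zero, ite_smul, one_smul, zero_smul]

theorem fwdDiff_iter_eq_of_hasSum_choose {G : Type*} [AddCommGroup G] [TopologicalSpace G]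
    [T2Space G] {F m : ℕ → G} (hF : ∀ k, HasSum (fun j ↦ k.choose j • m j) (F k)) (n : ℕ) :
    Δ_[1] ^[n] F 0 = m n := by
  have hF' : ∀ k ≤ n, F k = ∑ j ∈ range (n + 1), k.choose j • m j := fun k hk ↦
    (hF k).unique <| hasSum_sum_of_ne_finset_zero fun j hj ↦ by
      rw [Nat.choose_eq_zero_of_lt (by simp only [mem_range, not_lt] at hj; omega), zero_smul]
  calc Δ_[1] ^[n] F 0 = Δ_[1] ^[n] (∑ j ∈ range (n + 1), fun k : ℕ ↦ k.choose j • m j) 0 := by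
        simp only [fwdDiff_iter_eq_sum_shift, zero_add, nsmul_one, Nat.cast_id, Finset.sum_apply]
        refine sum_congr rfl fun k hk ↦ ?_
        rw [hF' k (Nat.lt_succ_iff.1 (mem_range.1 hk))]
    _ = m n := by
        simp [fwdDiff_iter_finsetSum, fwdDiff_iter_choose_smul_zero]

structure IsUltrametricVal {M : Type*} [AddCommGroup M] (v : M → EReal) : Prop where
  map_zero : v 0 = ⊤
  map_neg : ∀ x, v (-x) = v x
  min_le_map_add : ∀ x y, min (v x) (v y) ≤ v (x + y)

namespace IsUltrametricVal

variable {M : Type*} [AddCommGroup M] {v : M → EReal}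

def ball (hv : IsUltrametricVal v) (r : EReal) : AddSubgroup M where
  carrier := {x | r ≤ v x}
  zero_mem' := by simp [hv.map_zero]
  add_mem' {x y} hx hy := (le_min hx hy).trans (hv.min_le_map_add x y)
  neg_mem' {x} hx := by rwa [Set.mem_ofPred_eq, hv.map_neg]

@[simp]
theorem mem_ball (hv : IsUltrametricVal v) {r : EReal} {x : M} : x ∈ hv.ball r ↔ r ≤ v x :=
  Iff.rfl

theorem le_val_smul (hv : IsUltrametricVal v) {E : Type*} [Field E] [Module E M]
    (hv_smul : ∀ (c : E) (x : M), c ≠ 0 → v (c • x) = v x) (c : E) (x : M) :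
    v x ≤ v (c • x) := by
  rcases eq_or_ne c 0 with rfl | hc
  · simp [hv.map_zero]
  · rw [hv_smul c x hc]

theorem le_val_fwdDiff_iter (hv : IsUltrametricVal v) {α : Type*} [AddCommMonoid α]
    {F : α → M} {r : EReal} (hF : ∀ y, r ≤ v (F y)) (h : α) (n : ℕ) (y : α) :
    r ≤ v (Δ_[h] ^[n] F y) := by
  rw [fwdDiff_iter_eq_sum_shift, ← hv.mem_ball]
  exact sum_mem fun k _ ↦ zsmul_mem ((hv.mem_ball).2 (hF _)) _

theorem hasBasis_nhds_zero (hv : IsUltrametricVal v) [TopologicalSpace M]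
    (hnhds : ∀ s : Set M, s ∈ 𝓝 (0 : M) ↔ ∃ r : ℝ, ∀ x : M, (r : EReal) ≤ v x → x ∈ s) :
    (𝓝 (0 : M)).HasBasis (fun _ : ℝ ↦ True) fun r ↦ (hv.ball r : Set M) :=
  ⟨fun s ↦ by simpa [Set.subset_def] using hnhds s⟩

variable [TopologicalSpace M] [IsTopologicalAddGroup M]

theorem mem_ball_of_hasSum (hv : IsUltrametricVal v) {r : ℝ}
    (hr : (hv.ball r : Set M) ∈ 𝓝 0) {ι : Type*} {g : ι → M} {s : M} (hs : HasSum g s)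
    (hg : ∀ i, g i ∈ hv.ball r) : s ∈ hv.ball r :=
  have hclosed : IsClosed (hv.ball r : Set M) :=
    AddSubgroup.isClosed_of_isOpen _ (AddSubgroup.isOpen_of_mem_nhds _ hr)
  hclosed.mem_of_tendsto hs (Eventually.of_forall fun _ ↦ sum_mem fun i _ ↦ hg i)

theorem iInf_le_val_of_hasSum (hv : IsUltrametricVal v)
    (hball : ∀ r : ℝ, (hv.ball r : Set M) ∈ 𝓝 0) {ι : Type*} {g : ι → M} {s : M}
    (hs : HasSum g s) :
    ⨅ i, v (g i) ≤ v s := by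
  refine le_of_forall_lt_imp_le_of_dense fun c hc ↦ ?_
  obtain ⟨r, hcr, hr⟩ := EReal.exists_between_coe_real hc
  exact hcr.le.trans <| (hv.mem_ball).1 <|
    hv.mem_ball_of_hasSum (hball r) hs fun i ↦ (hv.mem_ball).2 (hr.le.trans (iInf_le _ i))

end IsUltrametricVal

theorem continuous_of_hasSum_binomMod_smul {p : ℕ} [hp : Fact p.Prime] {E : Type*} [Field E]
    [CharP E p] {M : Type*} [AddCommGroup M] [Module E M] [TopologicalSpace M]
    [IsTopologicalAddGroup M] {v : M → EReal} (hv : IsUltrametricVal v)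
    (hv_smul : ∀ (c : E) (x : M), c ≠ 0 → v (c • x) = v x)
    (hB : (𝓝 (0 : M)).HasBasis (fun _ : ℝ ↦ True) fun r ↦ (hv.ball r : Set M))
    {m : ℕ → M} (hm : Tendsto m atTop (𝓝 0)) {f : ℤ_[p] → M}
    (hf : ∀ z, HasSum (fun n ↦ binomMod p E z n • m n) (f z)) : Continuous f := by
  refine continuous_iff_continuousAt.2 fun z₀ ↦ tendsto_sub_nhds_zero_iff.1 ?_
  refine hB.tendsto_right_iff.2 fun r _ ↦ ?_
  obtain ⟨N, hN⟩ := eventually_atTop.1 (hB.tendsto_right_iff.1 hm r trivial)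
  have hpN : (0 : ℝ) < (p : ℝ) ^ (-(N : ℤ)) := zpow_pos (by exact_mod_cast hp.out.pos) _
  filter_upwards [Metric.closedBall_mem_nhds z₀ hpN] with z hz
  have hzN : z - z₀ ∈ Ideal.span {(p : ℤ_[p]) ^ N} :=
    (PadicInt.norm_le_pow_iff_mem_span_pow _ _).1 (by rwa [← dist_eq_norm])
  refine hv.mem_ball_of_hasSum (hB.mem_of_mem trivial) ((hf z).sub (hf z₀)) fun n ↦ ?_
  rw [← sub_smul]
  rcases lt_or_ge n N with hn | hn
  · rw [binomMod_eq_of_sub_mem_span hn hzN, sub_self, zero_smul]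
    exact zero_mem _
  · exact (hN n hn).trans (hv.le_val_smul hv_smul _ _)

theorem mahler_series_continuous_and_inf_general
    {p : ℕ} [Fact p.Prime] {E : Type*} [Field E] [CharP E p]
    {M : Type*} [AddCommGroup M] [Module E M]
    [UniformSpace M] [IsUniformAddGroup M] [T2Space M]
    (v : M → EReal)
    (hv_top : ∀ x : M, v x = ⊤ ↔ x = 0)
    (hv_smul : ∀ (c : E) (x : M), c ≠ 0 → v (c • x) = v x)
    (hv_add : ∀ x y : M, min (v x) (v y) ≤ v (x + y))
    (hnhds : ∀ s : Set M, s ∈ 𝓝 (0 : M) ↔ ∃ r : ℝ, ∀ x : M, (r : EReal) ≤ v x → x ∈ s)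
    (m : ℕ → M) (hm : Tendsto m atTop (𝓝 0))
    (f : ℤ_[p] → M)
    (hf : ∀ z : ℤ_[p], HasSum (fun n => binomMod p E z n • m n) (f z)) :
    Continuous f ∧ (⨅ z : ℤ_[p], v (f z)) = ⨅ n : ℕ, v (m n) := by
  have hv : IsUltrametricVal v :=
    ⟨(hv_top 0).2 rfl, fun x ↦ by simpa using hv_smul (-1) x (by simp), hv_add⟩
  have hB := hv.hasBasis_nhds_zero hnhds
  refine ⟨continuous_of_hasSum_binomMod_smul hv hv_smul hB hm hf,
    le_antisymm (le_iInf fun n ↦ ?_) (le_iInf fun z ↦ ?_)⟩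
  · have hnat : ∀ k : ℕ, HasSum (fun j ↦ k.choose j • m j) (f k) := fun k ↦ by
      simpa only [binomMod_natCast, Nat.cast_smul_eq_nsmul] using hf k
    calc ⨅ z, v (f z) ≤ v (Δ_[1] ^[n] (fun k : ℕ ↦ f k) 0) :=
          hv.le_val_fwdDiff_iter (fun k : ℕ ↦ iInf_le (fun z ↦ v (f z)) k) 1 n 0
      _ = v (m n) := by rw [fwdDiff_iter_eq_of_hasSum_choose hnat]
  · calc ⨅ n, v (m n) ≤ ⨅ n, v (binomMod p E z n • m n) :=
          iInf_mono fun n ↦ hv.le_val_smul hv_smul _ _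
      _ ≤ v (f z) := hv.iInf_le_val_of_hasSum (fun _ ↦ hB.mem_of_mem trivial) (hf z)

/-- Mahler series: if `m n → 0` in the separated complete valued `E`-vector space `M`,
then `f z = ∑ C(z,n) • m n` is continuous and `inf_z val (f z) = inf_n val (m n)`. -/
theorem mahler_series_continuous_and_inf
    {p : ℕ} [Fact p.Prime] {E : Type*} [Field E] [CharP E p]
    {M : Type*} [AddCommGroup M] [Module E M]
    [UniformSpace M] [IsUniformAddGroup M] [CompleteSpace M] [T2Space M]
    (v : M → EReal)
    (hv_top : ∀ x : M, v x = ⊤ ↔ x = 0)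
    (hv_smul : ∀ (c : E) (x : M), c ≠ 0 → v (c • x) = v x)
    (hv_add : ∀ x y : M, min (v x) (v y) ≤ v (x + y))
    (hnhds : ∀ s : Set M, s ∈ 𝓝 (0 : M) ↔ ∃ r : ℝ, ∀ x : M, (r : EReal) ≤ v x → x ∈ s)
    (m : ℕ → M) (hm : Tendsto m atTop (𝓝 0))
    (f : ℤ_[p] → M)
    (hf : ∀ z : ℤ_[p], HasSum (fun n => binomMod p E z n • m n) (f z)) :
    Continuous f ∧ (⨅ z : ℤ_[p], v (f z)) = ⨅ n : ℕ, v (m n) :=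
  mahler_series_continuous_and_inf_general v hv_top hv_smul hv_add hnhds m hm f hf
end

section
/- Let f : Z_p → M be continuous with Mahler coefficients m_n(f). Fix λ, μ ∈ R. Then f satisfies val_M(f(x)-f(y)) ≥ p^λ·p^i + μ whenever val_p(x-y) ≥ i (for all x,y ∈ Z_p and i ≥ 0) if and only if for all i ≥ 0 and all n ≥ p^i one has val_M(m_n(f)) ≥ p^λ·p^i + μ. -/
/-! In characteristic `p` the `p^i`-th forward difference is the plain difference
`f (z + p^i) - f z`, and the Mahler coefficients are `m n = Δ^n f 0`; so for `n ≥ p^i`,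
`m n = Δ^(n - p^i) (Δ^(p^i) f) 0` is an integral combination of differences `f x - f y` with
`p^i ∣ x - y`. Conversely, by Lucas' theorem `C(x, n) ≡ C(y, n) mod p` when `n < p^i` and
`p^i ∣ x - y`, so `f x - f y = ∑_{n ≥ p^i} (C(x, n) - C(y, n)) m n`. Both directions take place
inside the closed `E`-subspace `{x | c ≤ v x}`. -/

open Filter Topology

namespace Nat

theorem choose_modEq_choose_mod_pow {p j n k : ℕ} [Fact p.Prime] (hk : k < p ^ j) :
    n.choose k ≡ (n % p ^ j).choose k [MOD p] := by
  have lucas (a : ℕ) : (a.choose k : ℤ) ≡ ∏ i ∈ Finset.range j,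
      (a / p ^ i % p).choose (k / p ^ i % p) [ZMOD p] := by
    simpa [Nat.div_eq_of_lt hk] using
      Choose.choose_modEq_choose_mul_prod_range_choose (n := a) (k := k) (p := p) j
  have digits : ∀ i ∈ Finset.range j, n / p ^ i % p = n % p ^ j / p ^ i % p := by
    intro i hi
    rw [← Nat.mod_mul_right_div_self, ← Nat.mod_mul_right_div_self, ← pow_succ,
      Nat.mod_mod_of_dvd _ (pow_dvd_pow p (Finset.mem_range.mp hi))]
  rw [← Int.natCast_modEq_iff]
  refine (lucas n).trans ?_
  rw [Finset.prod_congr rfl fun i hi => by rw [digits i hi]]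
  exact (lucas _).symm

theorem choose_modEq_choose_of_modEq {p j a b k : ℕ} [Fact p.Prime] (hk : k < p ^ j)
    (hab : a ≡ b [MOD p ^ j]) : a.choose k ≡ b.choose k [MOD p] :=
  (choose_modEq_choose_mod_pow hk).trans (hab ▸ (choose_modEq_choose_mod_pow hk).symm)

end Nat

theorem PadicInt.natCast_modEq_of_pow_dvd_sub {p k a b : ℕ} [Fact p.Prime]
    (h : (p : ℤ_[p]) ^ k ∣ (a : ℤ_[p]) - b) : a ≡ b [MOD p ^ k] := by
  rw [← ZMod.natCast_eq_natCast_iff, ← map_natCast (toZModPow k), ← map_natCast (toZModPow k),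
    ← sub_eq_zero, ← map_sub, ← RingHom.mem_ker, ker_toZModPow, Ideal.mem_span_singleton]
  exact h

section binomMod

variable {p : ℕ} [Fact p.Prime] {E : Type*} [Field E] [CharP E p]

theorem binomMod_eq_of_pow_dvd_sub {j n : ℕ} (hn : n < p ^ j) {z : ℤ_[p]} {a : ℕ}
    (h : (p : ℤ_[p]) ^ j ∣ z - a) :
    binomMod p E z n = ZMod.castHom dvd_rfl E (a.choose n : ZMod p) := by
  have happr : (p : ℤ_[p]) ^ (n + 1) ∣ z - z.appr (n + 1) :=
    Ideal.mem_span_singleton.mp (PadicInt.appr_spec (n + 1) z)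
  set k := min j (n + 1)
  have hnk : n < p ^ k := by
    rcases min_choice j (n + 1) with hk | hk <;> simp only [k, hk]
    · exact hn
    · exact Nat.lt_of_succ_lt (Nat.lt_pow_self (Fact.out : p.Prime).one_lt)
  have hdvd : (p : ℤ_[p]) ^ k ∣ (z.appr (n + 1) : ℤ_[p]) - a := by
    rw [← sub_sub_sub_cancel_left _ _ z]
    exact dvd_sub ((pow_dvd_pow _ (min_le_left _ _)).trans h)
      ((pow_dvd_pow _ (min_le_right _ _)).trans happr)
  rw [binomMod, (ZMod.natCast_eq_natCast_iff _ _ _).mpr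
    (Nat.choose_modEq_choose_of_modEq hnk (PadicInt.natCast_modEq_of_pow_dvd_sub hdvd))]

theorem binomMod_eq_binomMod_of_pow_dvd_sub {i n : ℕ} {x y : ℤ_[p]}
    (hxy : (p : ℤ_[p]) ^ i ∣ x - y) (hn : n < p ^ i) :
    binomMod p E x n = binomMod p E y n := by
  have hy : (p : ℤ_[p]) ^ i ∣ y - y.appr i := Ideal.mem_span_singleton.mp (PadicInt.appr_spec i y)
  rw [binomMod_eq_of_pow_dvd_sub hn hy,
    binomMod_eq_of_pow_dvd_sub hn ((sub_add_sub_cancel x y _) ▸ dvd_add hxy hy)]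

@[simp]
theorem binomMod_zero_right (z : ℤ_[p]) : binomMod p E z 0 = 1 := by
  simp [binomMod]

theorem binomMod_zero_left {n : ℕ} (hn : n ≠ 0) : binomMod p E 0 n = 0 := by
  rw [binomMod_eq_of_pow_dvd_sub (j := n) (a := 0) (Nat.lt_pow_self (Fact.out : p.Prime).one_lt)
    (by simp), Nat.choose_eq_zero_of_lt (Nat.pos_of_ne_zero hn)]
  simp

theorem binomMod_add_one_succ (z : ℤ_[p]) (n : ℕ) :
    binomMod p E (z + 1) (n + 1) = binomMod p E z n + binomMod p E z (n + 1) := by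
  have hz : (p : ℤ_[p]) ^ (n + 1) ∣ z - z.appr (n + 1) :=
    Ideal.mem_span_singleton.mp (PadicInt.appr_spec (n + 1) z)
  have hz1 : (p : ℤ_[p]) ^ (n + 1) ∣ z + 1 - (z.appr (n + 1) + 1 : ℕ) := by
    simpa using hz
  have hlt : n + 1 < p ^ (n + 1) := Nat.lt_pow_self (Fact.out : p.Prime).one_lt
  rw [binomMod_eq_of_pow_dvd_sub hlt hz1, binomMod_eq_of_pow_dvd_sub hlt hz,
    binomMod_eq_of_pow_dvd_sub (Nat.lt_of_succ_lt hlt) hz, Nat.choose_succ_succ]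
  push_cast
  exact map_add _ _ _

end binomMod

open fwdDiff

theorem fwdDiff_iter_char_pow {p : ℕ} [Fact p.Prime] {R A M : Type*} [Ring R] [CharP R p]
    [AddCommMonoid A] [AddCommGroup M] [Module R M] (h : A) (f : A → M) (i : ℕ) (y : A) :
    (Δ_[h])^[p ^ i] f y = f (y + p ^ i • h) - f y := by
  have hp : p.Prime := Fact.out
  have coeff (k : ℕ) : (((-1) ^ (p ^ i - k) * (p ^ i).choose k : ℤ) : R) =
      if k = 0 then -1 else if k = p ^ i then 1 else 0 := by
    split_ifs with h0 hi
    · simp [h0, neg_one_pow_char_pow]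
    · simp [hi]
    · rcases lt_or_gt_of_ne hi with hlt | hgt
      · have hdvd : p ∣ (p ^ i).choose k := hp.dvd_choose_pow h0 hlt.ne
        simp [(CharP.cast_eq_zero_iff R p _).mpr hdvd]
      · simp [Nat.choose_eq_zero_of_lt hgt]
  rw [fwdDiff_iter_eq_sum_shift]
  simp_rw [← Int.cast_smul_eq_zsmul R, coeff, ite_smul]
  simp [Finset.sum_ite, Finset.filter_eq', hp.ne_zero, neg_add_eq_sub]

section Mahler

variable {p : ℕ} [Fact p.Prime] {E : Type*} [Field E] [CharP E p]
  {M : Type*} [AddCommGroup M] [Module E M] [TopologicalSpace M] [IsTopologicalAddGroup M]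
  {f : ℤ_[p] → M} {m : ℕ → M}

theorem hasSum_binomMod_smul_fwdDiff_iter
    (hmf : ∀ z, HasSum (fun n => binomMod p E z n • m n) (f z)) (n : ℕ) (z : ℤ_[p]) :
    HasSum (fun j => binomMod p E z j • m (j + n)) ((Δ_[1])^[n] f z) := by
  induction n generalizing z with
  | zero => simpa using hmf z
  | succ n ih =>
    have hdiff := (ih (z + 1)).sub (ih z)
    simp_rw [← sub_smul] at hdiff
    rw [← hasSum_nat_add_iff' 1] at hdiff
    simp_rw [binomMod_add_one_succ, add_sub_cancel_right] at hdiff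
    rw [Function.iterate_succ_apply']
    simpa [fwdDiff, add_right_comm _ 1 n, add_assoc] using hdiff

theorem mahler_coeff_eq_fwdDiff_iter [T2Space M]
    (hmf : ∀ z, HasSum (fun n => binomMod p E z n • m n) (f z)) (n : ℕ) :
    m n = (Δ_[1])^[n] f 0 := by
  refine HasSum.unique ?_ (hasSum_binomMod_smul_fwdDiff_iter hmf n 0)
  simpa using hasSum_single (f := fun j => binomMod p E 0 j • m (j + n)) 0
    fun j hj => by rw [binomMod_zero_left hj, zero_smul]

theorem mahler_coeff_mem_of_sub_mem [T2Space M] (N : Submodule E M)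
    (hmf : ∀ z, HasSum (fun n => binomMod p E z n • m n) (f z)) {i : ℕ}
    (hf : ∀ x y : ℤ_[p], (p : ℤ_[p]) ^ i ∣ x - y → f x - f y ∈ N) {n : ℕ} (hn : p ^ i ≤ n) :
    m n ∈ N := by
  obtain ⟨q, rfl⟩ := Nat.exists_eq_add_of_le' hn
  rw [mahler_coeff_eq_fwdDiff_iter hmf, Function.iterate_add_apply, fwdDiff_iter_eq_sum_shift]
  refine N.sum_mem fun k _ => N.toAddSubgroup.zsmul_mem ?_ _
  rw [fwdDiff_iter_char_pow (R := E)]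
  exact hf _ _ ⟨1, by simp⟩

theorem sub_mem_of_mahler_coeff_mem (N : Submodule E M) (hN : IsClosed (N : Set M))
    (hmf : ∀ z, HasSum (fun n => binomMod p E z n • m n) (f z)) {i : ℕ}
    (hm : ∀ n, p ^ i ≤ n → m n ∈ N) {x y : ℤ_[p]} (hxy : (p : ℤ_[p]) ^ i ∣ x - y) :
    f x - f y ∈ N := by
  have hsum := (hmf x).sub (hmf y)
  simp_rw [← sub_smul] at hsum
  refine hN.mem_of_tendsto hsum (.of_forall fun s => N.sum_mem fun n _ => ?_)
  rcases lt_or_ge n (p ^ i) with hlt | hge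
  · rw [binomMod_eq_binomMod_of_pow_dvd_sub hxy hlt, sub_self, zero_smul]
    exact N.zero_mem
  · exact N.smul_mem _ (hm n hge)

theorem forall_sub_mem_iff_forall_mahler_coeff_mem [T2Space M] (N : Submodule E M)
    (hN : IsClosed (N : Set M)) (hmf : ∀ z, HasSum (fun n => binomMod p E z n • m n) (f z))
    (i : ℕ) :
    (∀ x y : ℤ_[p], (p : ℤ_[p]) ^ i ∣ x - y → f x - f y ∈ N) ↔ ∀ n, p ^ i ≤ n → m n ∈ N :=
  ⟨fun hf _ hn => mahler_coeff_mem_of_sub_mem N hmf hf hn,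
    fun hm _ _ hxy => sub_mem_of_mahler_coeff_mem N hN hmf hm hxy⟩

end Mahler

def valuationSubmodule {E M : Type*} [Field E] [AddCommGroup M] [Module E M] (v : M → EReal)
    (hv_zero : v 0 = ⊤) (hv_smul : ∀ (c : E) (x : M), c ≠ 0 → v (c • x) = v x)
    (hv_add : ∀ x y : M, min (v x) (v y) ≤ v (x + y)) (r : EReal) : Submodule E M where
  carrier := {x | r ≤ v x}
  add_mem' hx hy := (le_min hx hy).trans (hv_add _ _)
  zero_mem' := (le_top : r ≤ ⊤).trans_eq hv_zero.symm
  smul_mem' c x hx := by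
    rcases eq_or_ne c 0 with rfl | hc
    · simp [hv_zero]
    · simpa [hv_smul c x hc] using hx

theorem superHolder_iff_mahler_coeffs_general
    {p : ℕ} [Fact p.Prime] {E : Type*} [Field E] [CharP E p]
    {M : Type*} [AddCommGroup M] [Module E M]
    [UniformSpace M] [IsUniformAddGroup M] [T2Space M]
    (v : M → EReal)
    (hv_top : ∀ x : M, v x = ⊤ ↔ x = 0)
    (hv_smul : ∀ (c : E) (x : M), c ≠ 0 → v (c • x) = v x)
    (hv_add : ∀ x y : M, min (v x) (v y) ≤ v (x + y))
    (hnhds : ∀ s : Set M, s ∈ 𝓝 (0 : M) ↔ ∃ r : ℝ, ∀ x : M, (r : EReal) ≤ v x → x ∈ s)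
    (lam mu : ℝ)
    (f : ℤ_[p] → M)
    (m : ℕ → M)
    (hmf : ∀ z : ℤ_[p], HasSum (fun n => binomMod p E z n • m n) (f z)) :
    (∀ (i : ℕ) (x y : ℤ_[p]), (p : ℤ_[p]) ^ i ∣ (x - y) →
        (((p : ℝ) ^ (lam + (i : ℝ)) + mu : ℝ) : EReal) ≤ v (f x - f y)) ↔
    (∀ i n : ℕ, p ^ i ≤ n →
        (((p : ℝ) ^ (lam + (i : ℝ)) + mu : ℝ) : EReal) ≤ v (m n)) := by
  let N (r : ℝ) : Submodule E M := valuationSubmodule v ((hv_top 0).2 rfl) hv_smul hv_add r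
  have hN (r : ℝ) : IsClosed (N r : Set M) :=
    (N r).toAddSubgroup.isClosed_of_isOpen <|
      (N r).toAddSubgroup.isOpen_of_mem_nhds <| (hnhds _).2 ⟨r, fun _ h => h⟩
  exact forall_congr' fun i =>
    forall_sub_mem_iff_forall_mahler_coeff_mem (N _) (hN _) hmf i

/-- Amice-type characterization of super-Hölder functions via Mahler coefficients:
`f ∈ H^{λ,μ}(ℤ_p, M)` iff `val (m_n(f)) ≥ p^λ p^i + μ` whenever `n ≥ p^i`. -/
theorem superHolder_iff_mahler_coeffs
    {p : ℕ} [Fact p.Prime] {E : Type*} [Field E] [CharP E p]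
    {M : Type*} [AddCommGroup M] [Module E M]
    [UniformSpace M] [IsUniformAddGroup M] [CompleteSpace M] [T2Space M]
    (v : M → EReal)
    (hv_top : ∀ x : M, v x = ⊤ ↔ x = 0)
    (hv_smul : ∀ (c : E) (x : M), c ≠ 0 → v (c • x) = v x)
    (hv_add : ∀ x y : M, min (v x) (v y) ≤ v (x + y))
    (hnhds : ∀ s : Set M, s ∈ 𝓝 (0 : M) ↔ ∃ r : ℝ, ∀ x : M, (r : EReal) ≤ v x → x ∈ s)
    (lam mu : ℝ)
    (f : ℤ_[p] → M) (hf : Continuous f)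
    (m : ℕ → M) (hm : Tendsto m atTop (𝓝 0))
    (hmf : ∀ z : ℤ_[p], HasSum (fun n => binomMod p E z n • m n) (f z)) :
    (∀ (i : ℕ) (x y : ℤ_[p]), (p : ℤ_[p]) ^ i ∣ (x - y) →
        (((p : ℝ) ^ (lam + (i : ℝ)) + mu : ℝ) : EReal) ≤ v (f x - f y)) ↔
    (∀ i n : ℕ, p ^ i ≤ n →
        (((p : ℝ) ^ (lam + (i : ℝ)) + mu : ℝ) : EReal) ≤ v (m n)) :=
  superHolder_iff_mahler_coeffs_general v hv_top hv_smul hv_add hnhds lam mu f m hmf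
end

section
/- Let M be a complete valued E-vector space which is also a ring with val_M(mm') ≥ val_M(m)+val_M(m'). If f ∈ H^{λ,μ}(Z_p, M) takes values of valuation ≥ c and g ∈ H^{λ,ν}(Z_p, M) takes values of valuation ≥ d, then the product fg lies in H^{λ, min(μ+d, ν+c)}(Z_p, M) and takes values of valuation ≥ c+d. -/
open Filter Topology

/-- `f ∈ H^{λ,μ}(ℤ_p, M)`: the super-Hölder condition
`val (f x - f y) ≥ p^λ · p^i + μ` whenever `p^i ∣ x - y`. -/
def SuperHolder (p : ℕ) [Fact p.Prime] {M : Type*} [AddCommGroup M]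
    (v : M → EReal) (lam mu : ℝ) (f : ℤ_[p] → M) : Prop :=
  ∀ (i : ℕ) (x y : ℤ_[p]), (p : ℤ_[p]) ^ i ∣ (x - y) →
    (((p : ℝ) ^ (lam + (i : ℝ)) + mu : ℝ) : EReal) ≤ v (f x - f y)

/-! Write `f x g x - f y g y = (f x - f y) g x + f y (g x - g y)`. The first term has valuation at
least the Hölder bound of `f` plus `d`, the second at least `c` plus the Hölder bound of `g`, and
the ultrametric inequality keeps the smaller of the two. -/

section Valuation

variable {M : Type*} [Ring M] (v : M → EReal)

theorem coe_add_le_val_mul (hv_mul : ∀ x y : M, v x + v y ≤ v (x * y)) {a b : ℝ} {x y : M}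
    (hx : (a : EReal) ≤ v x) (hy : (b : EReal) ≤ v y) : ((a + b : ℝ) : EReal) ≤ v (x * y) :=
  calc ((a + b : ℝ) : EReal) = (a : EReal) + b := EReal.coe_add a b
    _ ≤ v x + v y := add_le_add hx hy
    _ ≤ v (x * y) := hv_mul x y

theorem SuperHolder.mul {p : ℕ} [Fact p.Prime]
    (hv_add : ∀ x y : M, min (v x) (v y) ≤ v (x + y))
    (hv_mul : ∀ x y : M, v x + v y ≤ v (x * y))
    {lam mu nu c d : ℝ} {f g : ℤ_[p] → M}
    (hf : SuperHolder p v lam mu f) (hg : SuperHolder p v lam nu g)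
    (hfc : ∀ x : ℤ_[p], (c : EReal) ≤ v (f x))
    (hgd : ∀ x : ℤ_[p], (d : EReal) ≤ v (g x)) :
    SuperHolder p v lam (min (mu + d) (nu + c)) (fun x => f x * g x) := by
  intro i x y hxy
  set P : ℝ := (p : ℝ) ^ (lam + (i : ℝ))
  have product_rule : f x * g x - f y * g y = (f x - f y) * g x + f y * (g x - g y) := by
    noncomm_ring
  have h_left : ((P + mu + d : ℝ) : EReal) ≤ v ((f x - f y) * g x) :=
    coe_add_le_val_mul v hv_mul (hf i x y hxy) (hgd x)
  have h_right : ((c + (P + nu) : ℝ) : EReal) ≤ v (f y * (g x - g y)) :=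
    coe_add_le_val_mul v hv_mul (hfc y) (hg i x y hxy)
  have hmin_left := min_le_left (mu + d) (nu + c)
  have hmin_right := min_le_right (mu + d) (nu + c)
  rw [product_rule]
  refine le_trans (le_min (le_trans ?_ h_left) (le_trans ?_ h_right)) (hv_add _ _) <;>
    exact EReal.coe_le_coe_iff.2 (by linarith)

end Valuation

theorem superHolder_mul_general
    {p : ℕ} [Fact p.Prime]
    {M : Type*} [CommRing M]
    (v : M → EReal)
    (hv_add : ∀ x y : M, min (v x) (v y) ≤ v (x + y))
    (hv_mul : ∀ x y : M, v x + v y ≤ v (x * y))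
    (lam mu nu c d : ℝ) (f g : ℤ_[p] → M)
    (hf : SuperHolder p v lam mu f) (hg : SuperHolder p v lam nu g)
    (hfc : ∀ x : ℤ_[p], (c : EReal) ≤ v (f x))
    (hgd : ∀ x : ℤ_[p], (d : EReal) ≤ v (g x)) :
    SuperHolder p v lam (min (mu + d) (nu + c)) (fun x => f x * g x) ∧
      ∀ x : ℤ_[p], ((c + d : ℝ) : EReal) ≤ v (f x * g x) :=
  ⟨hf.mul v hv_add hv_mul hg hfc hgd, fun x => coe_add_le_val_mul v hv_mul (hfc x) (hgd x)⟩

/-- Products of super-Hölder functions with values of bounded valuation: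
if `f ∈ H^{λ,μ}` with values of valuation `≥ c` and `g ∈ H^{λ,ν}` with values of
valuation `≥ d`, then `fg ∈ H^{λ, min(μ+d, ν+c)}` with values of valuation `≥ c+d`. -/
theorem superHolder_mul
    {p : ℕ} [Fact p.Prime] {E : Type*} [Field E] [CharP E p]
    {M : Type*} [CommRing M] [Algebra E M]
    [UniformSpace M] [IsUniformAddGroup M] [CompleteSpace M] [T2Space M]
    (v : M → EReal)
    (hv_top : ∀ x : M, v x = ⊤ ↔ x = 0)
    (hv_smul : ∀ (c : E) (x : M), c ≠ 0 → v (c • x) = v x)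
    (hv_add : ∀ x y : M, min (v x) (v y) ≤ v (x + y))
    (hv_mul : ∀ x y : M, v x + v y ≤ v (x * y))
    (hnhds : ∀ s : Set M, s ∈ 𝓝 (0 : M) ↔ ∃ r : ℝ, ∀ x : M, (r : EReal) ≤ v x → x ∈ s)
    (lam mu nu c d : ℝ) (f g : ℤ_[p] → M)
    (hf : SuperHolder p v lam mu f) (hg : SuperHolder p v lam nu g)
    (hfc : ∀ x : ℤ_[p], (c : EReal) ≤ v (f x))
    (hgd : ∀ x : ℤ_[p], (d : EReal) ≤ v (g x)) :
    SuperHolder p v lam (min (mu + d) (nu + c)) (fun x => f x * g x) ∧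
      ∀ x : ℤ_[p], ((c + d : ℝ) : EReal) ≤ v (f x * g x) :=
  superHolder_mul_general v hv_add hv_mul lam mu nu c d f g hf hg hfc hgd
end

section
/- Let E be a field of characteristic p and M = E[[X]] with the X-adic valuation. The function Z_p → M sending a to (1+X)^a (defined by the binomial series (1+X)^a = Σ_{n≥0} C(a,n) X^n with C(a,n) reduced mod p) lies in H^{0,0}(Z_p, M); that is, val_X((1+X)^a - (1+X)^b) ≥ p^i whenever val_p(a-b) ≥ i. -/
/-!
By Lucas's theorem, `C(m, n) mod p` depends only on `m mod p^k` as soon as `n < p^k`. The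
coefficient of `X^n` in `(1+X)^a` is `C(m, n) mod p` for an integer approximation `m` of `a`
modulo `p^(n+1)`; if `p^i ∣ a - b` and `n < p^i`, the approximations of `a` and `b` agree modulo
`p^k` with `k = min (n+1) i` and `n < p^k`, so the coefficients of `X^n` agree.
-/

open PowerSeries

/-- The power series `(1+X)^a = ∑ C(a,n) X^n ∈ E[[X]]` for `a ∈ ℤ_p`. -/
noncomputable def onePlusXPow (p : ℕ) [Fact p.Prime] (E : Type*) [Field E] [CharP E p]
    (a : ℤ_[p]) : PowerSeries E :=
  PowerSeries.mk fun n => binomMod p E a n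

theorem Nat.ModEq.div_of_mul {m m' c d : ℕ} (h : m ≡ m' [MOD c * d]) : m / c ≡ m' / c [MOD d] := by
  unfold Nat.ModEq at h ⊢
  rw [← Nat.mod_mul_right_div_self, ← Nat.mod_mul_right_div_self, h]

theorem Choose.choose_modEq_choose_of_modEq {p m m' n k : ℕ} [Fact p.Prime]
    (hm : m ≡ m' [MOD p ^ k]) (hn : n < p ^ k) : m.choose n ≡ m'.choose n [MOD p] := by
  induction k generalizing m m' n with
  | zero =>
    obtain rfl : n = 0 := by simpa using hn
    simp only [Nat.choose_zero_right, Nat.ModEq.refl]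
  | succ k ih =>
    have hp : 0 < p := (Fact.out : p.Prime).pos
    have hmod : m % p = m' % p := hm.of_dvd (dvd_pow_self p k.succ_ne_zero)
    have hdiv : m / p ≡ m' / p [MOD p ^ k] := (pow_succ' p k ▸ hm).div_of_mul
    have hn' : n / p < p ^ k := (Nat.div_lt_iff_lt_mul hp).mpr (pow_succ p k ▸ hn)
    calc m.choose n ≡ (m % p).choose (n % p) * (m / p).choose (n / p) [MOD p] :=
          choose_modEq_choose_mod_mul_choose_div_nat
      _ ≡ (m' % p).choose (n % p) * (m' / p).choose (n / p) [MOD p] :=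
          hmod ▸ (ih hdiv hn').mul_left _
      _ ≡ m'.choose n [MOD p] := choose_modEq_choose_mod_mul_choose_div_nat.symm

theorem PadicInt.appr_modEq_appr_of_pow_dvd_sub {p : ℕ} [Fact p.Prime] {a b : ℤ_[p]} {k n : ℕ}
    (h : (p : ℤ_[p]) ^ k ∣ a - b) (hkn : k ≤ n) : a.appr n ≡ b.appr n [MOD p ^ k] := by
  have appr_cast : ∀ x : ℤ_[p], (x.appr n : ZMod (p ^ k)) = toZModPow k x := fun x => by
    rw [← cast_toZModPow k n hkn x]
    exact (ZMod.cast_natCast (pow_dvd_pow p hkn) _).symm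
  rw [← ZMod.natCast_eq_natCast_iff, appr_cast, appr_cast, ← sub_eq_zero, ← map_sub,
    ← RingHom.mem_ker, ker_toZModPow, Ideal.mem_span_singleton]
  exact h

theorem binomMod_eq_of_pow_dvd_sub_s4 {p : ℕ} [Fact p.Prime] {E : Type*} [Field E] [CharP E p]
    {i n : ℕ} {a b : ℤ_[p]} (h : (p : ℤ_[p]) ^ i ∣ a - b) (hn : n < p ^ i) :
    binomMod p E a n = binomMod p E b n := by
  have hk : n < p ^ min (n + 1) i := by
    rcases min_cases (n + 1) i with ⟨hmin, -⟩ | ⟨hmin, -⟩ <;> rw [hmin]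
    · exact Nat.lt_pow_self (Fact.out : p.Prime).one_lt |>.trans
        (Nat.pow_lt_pow_right (Fact.out : p.Prime).one_lt n.lt_succ_self)
    · exact hn
  have happr : a.appr (n + 1) ≡ b.appr (n + 1) [MOD p ^ min (n + 1) i] :=
    PadicInt.appr_modEq_appr_of_pow_dvd_sub ((pow_dvd_pow _ (min_le_right _ _)).trans h)
      (min_le_left _ _)
  unfold binomMod
  rw [(ZMod.natCast_eq_natCast_iff _ _ _).mpr (Choose.choose_modEq_choose_of_modEq happr hk)]

/-- The function `a ↦ (1+X)^a` lies in `H^{0,0}(ℤ_p, E[[X]])`: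
`val_X ((1+X)^a - (1+X)^b) ≥ p^i` whenever `val_p (a-b) ≥ i`. -/
theorem onePlusXPow_superHolder
    {p : ℕ} [Fact p.Prime] {E : Type*} [Field E] [CharP E p]
    (i : ℕ) (a b : ℤ_[p]) (h : (p : ℤ_[p]) ^ i ∣ (a - b)) :
    (X : PowerSeries E) ^ (p ^ i) ∣ (onePlusXPow p E a - onePlusXPow p E b) := by
  rw [X_pow_dvd_iff]
  intro n hn
  rw [map_sub, onePlusXPow, onePlusXPow, coeff_mk, coeff_mk, binomMod_eq_of_pow_dvd_sub_s4 h hn,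
    sub_self]
end

section
/- Let E be a field of characteristic p, k ≥ 1 (k ≥ 2 if p = 2), and ε > 0. If f(X) ∈ E[[X]] satisfies val_X((1+p^{k+i})·f - f) ≥ p^{k+ε+i} + μ for some μ and all i ≥ 0 (where (1+p^m)·f(X) = f((1+X)^{1+p^m}-1)), then f ∈ E[[X^p]]. -/
/-!
In characteristic `p` we have `(1+X)^(1+p^m) = (1+X)(1+X^(p^m))`, so `1+p^m` acts by substituting
`X + h` with `h = X^(p^m)(1+X)`. By Taylor's formula `f(X+h) ≡ f + h f'` modulo `h²`, hence the
coefficient of `X^(p^m+d)` in `(1+p^m)·f - f` is the coefficient of `X^d` in `(1+X) f'` as long as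
`d < p^m`. Since `ε > 0`, the hypothesis forces this coefficient to vanish once `m` is large, so
`(1+X) f' = 0`, i.e. `f' = 0`, which in characteristic `p` means `f ∈ E[[X^p]]`.
-/

open PowerSeries

/-- Composition `f ∘ g` of power series (correct whenever `g` has zero constant term). -/
noncomputable def psComp {E : Type*} [CommRing E] (f g : PowerSeries E) : PowerSeries E :=
  PowerSeries.mk fun n =>
    ∑ j ∈ Finset.range (n + 1), PowerSeries.coeff j f * PowerSeries.coeff n (g ^ j)

theorem PadicInt.appr_natCast {p : ℕ} [Fact p.Prime] (N n : ℕ) :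
    (N : ℤ_[p]).appr n = N % p ^ n := by
  have h : ((N : ℤ_[p]).appr n : ZMod (p ^ n)) = N := map_natCast (PadicInt.toZModPow n) N
  rw [← ZMod.val_natCast (p ^ n) N, ← h, ZMod.val_natCast,
    Nat.mod_eq_of_lt (PadicInt.appr_lt _ _)]

theorem natCast_choose_mod_prime_pow {p : ℕ} [Fact p.Prime] {R : Type*} [CommRing R] [CharP R p]
    {n s : ℕ} (N : ℕ) (hn : n < p ^ s) :
    (((N % p ^ s).choose n : ℕ) : R) = (N.choose n : R) := by
  obtain ⟨c, hc⟩ := sub_dvd_pow_sub_pow (1 + Polynomial.X ^ p ^ s : Polynomial R) 1 (N / p ^ s)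
  rw [add_sub_cancel_left, one_pow, sub_eq_iff_eq_add'] at hc
  have hfrob : (1 + Polynomial.X : Polynomial R) ^ p ^ s = 1 + Polynomial.X ^ p ^ s := by
    rw [add_pow_char_pow, one_pow]
  have hsplit : (1 + Polynomial.X : Polynomial R) ^ N
      = (1 + Polynomial.X) ^ (N % p ^ s) * (1 + Polynomial.X ^ p ^ s * c) := by
    rw [← hc, ← hfrob, ← pow_mul, ← pow_add, Nat.mod_add_div]
  rw [← Polynomial.coeff_one_add_X_pow, ← Polynomial.coeff_one_add_X_pow, hsplit, mul_add,
    mul_one, Polynomial.coeff_add, mul_left_comm, Polynomial.coeff_X_pow_mul',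
    if_neg hn.not_ge, add_zero]

theorem onePlusXPow_natCast {p : ℕ} [Fact p.Prime] {E : Type*} [Field E] [CharP E p] (N : ℕ) :
    onePlusXPow p E N = (1 + X) ^ N := by
  have hp : 1 < p := (Fact.out : p.Prime).one_lt
  have hcoe : (1 + X : E⟦X⟧) ^ N = ((1 + Polynomial.X) ^ N : Polynomial E) := by
    rw [Polynomial.coe_pow, Polynomial.coe_add, Polynomial.coe_one, Polynomial.coe_X]
  ext n
  rw [onePlusXPow, coeff_mk, binomMod, PadicInt.appr_natCast, map_natCast, hcoe,
    Polynomial.coeff_coe, Polynomial.coeff_one_add_X_pow]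
  exact natCast_choose_mod_prime_pow N ((Nat.lt_pow_self hp).trans (Nat.pow_lt_pow_succ hp))

theorem onePlusXPow_one_add_pow_sub_one {p : ℕ} [Fact p.Prime] {E : Type*} [Field E] [CharP E p]
    (m : ℕ) : onePlusXPow p E (1 + (p : ℤ_[p]) ^ m) - 1 = X + X ^ p ^ m * (1 + X) := by
  have : CharP E⟦X⟧ p := charP_of_injective_ringHom C_injective p
  have hcast : 1 + (p : ℤ_[p]) ^ m = ((1 + p ^ m : ℕ) : ℤ_[p]) := by push_cast; rfl
  rw [hcast, onePlusXPow_natCast, pow_add, pow_one, add_pow_char_pow, one_pow]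
  ring

namespace PowerSeries

variable {R : Type*} [CommRing R]

theorem X_pow_dvd_derivative {n : ℕ} {g : R⟦X⟧} (h : X ^ (n + 1) ∣ g) : X ^ n ∣ d⁄dX R g := by
  rw [X_pow_dvd_iff] at h ⊢
  intro m hm
  rw [coeff_derivative, h (m + 1) (by omega), zero_mul]

theorem X_pow_dvd_sub_trunc (f : R⟦X⟧) (n : ℕ) : X ^ n ∣ f - (trunc n f : R⟦X⟧) := by
  rw [X_pow_dvd_iff]
  intro m hm
  rw [map_sub, Polynomial.coeff_coe, coeff_trunc, if_pos hm, sub_self]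

theorem coeff_eq_zero_of_derivative_eq_zero {p : ℕ} [NoZeroDivisors R] [CharP R p] {f : R⟦X⟧}
    (hf : d⁄dX R f = 0) {j : ℕ} (hj : ¬ p ∣ j) : coeff j f = 0 := by
  obtain _ | n := j
  · exact absurd (dvd_zero p) hj
  · have h := congrArg (coeff n) hf
    rw [coeff_derivative, map_zero] at h
    refine (mul_eq_zero.mp h).resolve_right ?_
    exact_mod_cast (CharP.cast_eq_zero_iff R p (n + 1)).not.mpr hj

end PowerSeries

theorem coeff_psComp_eq_coeff_aeval_trunc {R : Type*} [CommRing R] (f g : R⟦X⟧) (N : ℕ) :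
    coeff N (psComp f g) = coeff N (Polynomial.aeval g (trunc (N + 1) f)) := by
  rw [psComp, coeff_mk, Polynomial.aeval_eq_sum_range' (natDegree_trunc_lt f N), map_sum]
  refine Finset.sum_congr rfl fun j hj => ?_
  rw [coeff_trunc, if_pos (Finset.mem_range.mp hj), coeff_smul, smul_eq_mul]

/-- Taylor's formula `f(X + h) ≡ f + h f'` modulo `h²`, read off below `X ^ (2 * P)`. -/
theorem coeff_psComp_X_add {R : Type*} [CommRing R] (f h : R⟦X⟧) {P N : ℕ}
    (hh : X ^ P ∣ h) (hN : N < 2 * P) :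
    coeff N (psComp f (X + h)) = coeff N f + coeff N (h * d⁄dX R f) := by
  set q := trunc (N + 1) f
  obtain ⟨c, hc⟩ := (q.map (algebraMap R R⟦X⟧)).binomExpansion X h
  have haeval_X (r : Polynomial R) : Polynomial.aeval (X : R⟦X⟧) r = r :=
    Polynomial.eval₂_C_X_eq_coe
  rw [Polynomial.derivative_map, Polynomial.eval_map_algebraMap, Polynomial.eval_map_algebraMap,
    Polynomial.eval_map_algebraMap, haeval_X, haeval_X, ← derivative_coe] at hc
  have hq : X ^ (N + 1) ∣ f - (q : R⟦X⟧) := X_pow_dvd_sub_trunc f (N + 1)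
  have hder : X ^ (N + 1) ∣ h * d⁄dX R (f - (q : R⟦X⟧)) :=
    (pow_dvd_pow X (show N + 1 ≤ P + N by omega)).trans
      (pow_add (X : R⟦X⟧) P N ▸ mul_dvd_mul hh (X_pow_dvd_derivative hq))
  have hsq : X ^ (N + 1) ∣ c * h ^ 2 :=
    (pow_dvd_pow X (show N + 1 ≤ P * 2 by omega)).trans
      (dvd_mul_of_dvd_right (pow_mul (X : R⟦X⟧) P 2 ▸ pow_dvd_pow_of_dvd hh 2) c)
  have hdiff : X ^ (N + 1) ∣ Polynomial.aeval (X + h) q - (f + h * d⁄dX R f) := by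
    have : Polynomial.aeval (X + h) q - (f + h * d⁄dX R f)
        = c * h ^ 2 - (f - (q : R⟦X⟧)) - h * d⁄dX R (f - (q : R⟦X⟧)) := by
      rw [hc, map_sub]; ring
    exact this ▸ dvd_sub (dvd_sub hsq hq) hder
  have hN := X_pow_dvd_iff.mp hdiff N N.lt_succ_self
  rwa [map_sub, ← coeff_psComp_eq_coeff_aeval_trunc, sub_eq_zero, map_add] at hN

theorem exists_lt_pow_and_pow_add_le_rpow {p : ℕ} (hp : 1 < p) (k d : ℕ) {eps : ℝ}
    (heps : 0 < eps) (mu : ℝ) : ∃ i : ℕ, d < p ^ (k + i) ∧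
      ((p ^ (k + i) + d + 1 : ℕ) : ℝ) ≤ (p : ℝ) ^ ((k : ℝ) + eps + i) + mu := by
  have hp' : (1 : ℝ) < p := by exact_mod_cast hp
  have hc : 0 < (p : ℝ) ^ eps - 1 := sub_pos.mpr (Real.one_lt_rpow hp' heps)
  have hP : Filter.Tendsto (fun i : ℕ => (p : ℝ) ^ (k + i)) Filter.atTop Filter.atTop :=
    (tendsto_pow_atTop_atTop_of_one_lt hp').comp
      (Filter.tendsto_atTop_mono (fun i => Nat.le_add_left i k) Filter.tendsto_id)
  obtain ⟨i, hi₁, hi₂⟩ := ((hP.eventually_gt_atTop (d : ℝ)).and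
    ((hP.atTop_mul_const hc).eventually_ge_atTop ((d : ℝ) + 1 - mu))).exists
  refine ⟨i, by exact_mod_cast hi₁, ?_⟩
  have hsplit : (p : ℝ) ^ ((k : ℝ) + eps + i) = (p : ℝ) ^ (k + i) * (p : ℝ) ^ eps := by
    rw [add_right_comm, Real.rpow_add (by positivity), ← Nat.cast_add, Real.rpow_natCast]
  rw [hsplit]
  push_cast
  linarith

theorem superHolder_eps_implies_in_Xp_general
    {p : ℕ} [Fact p.Prime] {E : Type*} [Field E] [CharP E p]
    (k : ℕ)
    (eps mu : ℝ) (heps : 0 < eps)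
    (f : PowerSeries E)
    (hf : ∀ i c : ℕ, (c : ℝ) ≤ (p : ℝ) ^ ((k : ℝ) + eps + (i : ℝ)) + mu →
      (X : PowerSeries E) ^ c ∣
        (psComp f (onePlusXPow p E (1 + (p : ℤ_[p]) ^ (k + i)) - 1) - f)) :
    ∀ j : ℕ, ¬ p ∣ j → PowerSeries.coeff j f = 0 := by
  have hp : 1 < p := (Fact.out : p.Prime).one_lt
  have hD : (1 + X) * d⁄dX E f = 0 := by
    ext d
    obtain ⟨i, hdP, hbound⟩ := exists_lt_pow_and_pow_add_le_rpow hp k d heps mu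
    have hcoeff := X_pow_dvd_iff.mp (hf i _ hbound) (p ^ (k + i) + d) (by omega)
    rw [onePlusXPow_one_add_pow_sub_one, map_sub,
      coeff_psComp_X_add f _ (dvd_mul_right _ _) (by omega), add_sub_cancel_left, mul_assoc,
      coeff_X_pow_mul', if_pos (by omega), Nat.add_sub_cancel_left] at hcoeff
    rwa [map_zero]
  have hne : (1 + X : E⟦X⟧) ≠ 0 := fun h => by simpa using congrArg constantCoeff h
  exact fun j => coeff_eq_zero_of_derivative_eq_zero ((mul_eq_zero.mp hD).resolve_left hne)

/-- Prop `levelzer`: if `f ∈ E[[X]]` satisfies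
`val_X ((1+p^{k+i})·f - f) ≥ p^{k+ε+i} + μ` for all `i ≥ 0` (with `ε > 0`), where
`(1+p^m)·f = f((1+X)^{1+p^m} - 1)`, then `f ∈ E[[X^p]]`. -/
theorem superHolder_eps_implies_in_Xp
    {p : ℕ} [Fact p.Prime] {E : Type*} [Field E] [CharP E p]
    (k : ℕ) (hk : 1 ≤ k) (hk2 : p = 2 → 2 ≤ k)
    (eps mu : ℝ) (heps : 0 < eps)
    (f : PowerSeries E)
    (hf : ∀ i c : ℕ, (c : ℝ) ≤ (p : ℝ) ^ ((k : ℝ) + eps + (i : ℝ)) + mu →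
      (X : PowerSeries E) ^ c ∣
        (psComp f (onePlusXPow p E (1 + (p : ℤ_[p]) ^ (k + i)) - 1) - f)) :
    ∀ j : ℕ, ¬ p ∣ j → PowerSeries.coeff j f = 0 :=
  superHolder_eps_implies_in_Xp_general k eps mu heps f hf
end

section
/- Let Ẽ^+ be the X-adic completion of ∪_{n≥0} E[[X^{1/p^n}]], with its continuous Z_p^×-action. Every f ∈ Ẽ^+ can be written uniquely as f = Σ_{i∈I} (1+X)^i a_i(f) with a_i(f) ∈ E[[X]], a_i(f) → 0, where I = ∪_m (p^{-m}Z ∩ [0,1)); moreover val_X(f) - 1 < inf_{i∈I} val_X(a_i(f)) ≤ val_X(f). -/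
/-!
For each level `M`, `E⟦X⟧` is free over `E⟦X^{p^M}⟧` on the `(1+X)^j`, `j < p^M`: the coefficient
of `X^{q p^M + s}` in `∑ⱼ (1+X)^j aⱼ(X^{p^M})` is `∑ⱼ binom(j, s) [X^q] aⱼ`, a unitriangular
system. Hence finite expansions exist, and such a sum is divisible by `X^{K p^M}` only if every `aⱼ`
is divisible by `X^K`. As `(1+X)^p = 1 + X^p` in characteristic `p`, the levels are compatible, so
`v (∑ᵢ (1+X)^i aᵢ) ≥ K` forces `X^K ∣ aᵢ` for every `i` of any finite sum. Expanding approximations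
of `x` taken from the levels, consecutive coefficient families agree modulo `X^k`, and their
`X`-adic limits expand `x`. The same divisibility criterion gives uniqueness and `v x < inf + 1`;
the ultrametric inequality gives `inf ≤ v x`.
-/

open Filter Topology PowerSeries

/-- `f(X) ↦ f(X^p)`. -/
noncomputable def expandP (p : ℕ) (E : Type*) [Field E] (f : PowerSeries E) : PowerSeries E :=
  PowerSeries.mk fun k => if p ∣ k then PowerSeries.coeff (R := E) (k / p) f else 0

/-- The index set `I = ∪_m (p^{-m} ℤ ∩ [0,1))`, as a set of rationals `j / p^m`. -/
def Iset (p : ℕ) : Type := {q : ℚ // ∃ m j : ℕ, j < p ^ m ∧ q = (j : ℚ) / (p : ℚ) ^ m}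

instance (p : ℕ) : DecidableEq (Iset p) := fun a b =>
  decidable_of_iff _ Subtype.ext_iff.symm

/-- The element `(1+X)^i` of `Ẽ⁺` for `i = j / p^m ∈ I`, i.e. `(1 + X^{1/p^m})^j`. -/
noncomputable def onePlusXRat {p : ℕ} {E : Type*} [Field E] {R : Type*} [CommRing R]
    (ι : ℕ → PowerSeries E →+* R) (i : Iset p) : R :=
  ι i.2.choose ((1 + X) ^ i.2.choose_spec.choose)

namespace PowerSeries

open Matrix

variable {A : Type*} [CommRing A]

theorem exists_forall_X_pow_dvd_sub (u : ℕ → A⟦X⟧) (hu : ∀ k, X ^ k ∣ u (k + 1) - u k) :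
    ∃ a : A⟦X⟧, ∀ k, X ^ k ∣ a - u k := by
  have tail : ∀ k l, k ≤ l → X ^ k ∣ u l - u k := by
    intro k l hkl
    induction l, hkl using Nat.le_induction with
    | base => simp
    | succ l hkl ih =>
      rw [← sub_add_sub_cancel]
      exact dvd_add ((pow_dvd_pow X hkl).trans (hu l)) ih
  refine ⟨mk fun q => coeff q (u (q + 1)), fun k => X_pow_dvd_iff.mpr fun q hq => ?_⟩
  have := X_pow_dvd_iff.mp (tail (q + 1) k hq) q q.lt_succ_self
  rw [map_sub, sub_eq_zero] at this
  rw [map_sub, coeff_mk, this, sub_self]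

theorem exists_X_pow_dvd_and_not_dvd_succ {ι : Type*} {a : ι → A⟦X⟧} (ha : a ≠ 0) :
    ∃ c i₀, (∀ i, X ^ c ∣ a i) ∧ ¬ X ^ (c + 1) ∣ a i₀ := by
  classical
  have hP : ∃ c, ∃ i, ¬ X ^ (c + 1) ∣ a i := by
    obtain ⟨i, hi⟩ := Function.ne_iff.mp ha
    obtain ⟨n, hn⟩ := not_forall.mp (mt PowerSeries.ext hi)
    exact ⟨n, i, fun h => hn (by simpa using X_pow_dvd_iff.mp h n n.lt_succ_self)⟩
  obtain ⟨i₀, hi₀⟩ := Nat.find_spec hP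
  refine ⟨Nat.find hP, i₀, fun i => ?_, hi₀⟩
  match hc : Nat.find hP with
  | 0 => simp
  | c + 1 =>
    exact not_exists_not.mp (Nat.find_min hP (hc ▸ c.lt_succ_self)) i

theorem coeff_one_add_X_pow (j k : ℕ) : coeff k ((1 + X : A⟦X⟧) ^ j) = j.choose k := by
  have : (1 + X : A⟦X⟧) ^ j = ((1 + Polynomial.X) ^ j : Polynomial A) := by simp
  rw [this, Polynomial.coeff_coe, Polynomial.coeff_one_add_X_pow]

variable {N : ℕ} (hN : N ≠ 0)

theorem coeff_one_add_X_pow_mul_expand {j s : ℕ} (hj : j < N) (hs : s < N) (q : ℕ) (a : A⟦X⟧) :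
    coeff (q * N + s) ((1 + X) ^ j * expand N hN a) = j.choose s * coeff q a := by
  rw [coeff_mul, Finset.sum_eq_single (s, N * q)]
  · rw [coeff_one_add_X_pow, coeff_expand_mul]
  · rintro ⟨k, l⟩ hkl hne
    rw [Finset.HasAntidiagonal.mem_antidiagonal] at hkl
    rw [coeff_one_add_X_pow, coeff_expand]
    by_cases hk : k ≤ j
    · have : ¬ N ∣ l := by
        rintro ⟨u, rfl⟩
        have hks : k = s := by
          have := congrArg (· % N) hkl
          simp only [Nat.add_mul_mod_self_left, Nat.mul_comm q, Nat.mul_add_mod] at this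
          rwa [Nat.mod_eq_of_lt (by omega), Nat.mod_eq_of_lt hs] at this
        subst hks
        have : u = q :=
          Nat.eq_of_mul_eq_mul_left (Nat.pos_of_ne_zero hN) (by linarith [mul_comm N q])
        exact hne (by rw [this, mul_comm])
      simp [this]
    · simp [Nat.choose_eq_zero_of_lt (not_le.mp hk)]
  · simp [add_comm, mul_comm]

variable (A) in
def binomialMatrix (N : ℕ) : Matrix (Fin N) (Fin N) A :=
  Matrix.of fun s j => ((j : ℕ).choose s : A)

theorem isUnit_det_binomialMatrix : IsUnit (binomialMatrix A N).det := by
  rw [Matrix.det_of_isUpperTriangular]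
  · simp [binomialMatrix]
  · intro s j hjs
    simp [binomialMatrix, Nat.choose_eq_zero_of_lt (show (j : ℕ) < s from hjs)]

theorem coeff_sum_one_add_X_pow_mul_expand (a : Fin N → A⟦X⟧) (q : ℕ) (s : Fin N) :
    coeff (q * N + s) (∑ j : Fin N, (1 + X) ^ (j : ℕ) * expand N hN (a j)) =
      (binomialMatrix A N *ᵥ fun j => coeff q (a j)) s := by
  simp [map_sum, coeff_one_add_X_pow_mul_expand hN _ s.2, mulVec, dotProduct, binomialMatrix]

theorem exists_eq_sum_one_add_X_pow_mul_expand (f : A⟦X⟧) :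
    ∃ a : Fin N → A⟦X⟧, f = ∑ j : Fin N, (1 + X) ^ (j : ℕ) * expand N hN (a j) := by
  refine ⟨fun j => mk fun q => ((binomialMatrix A N)⁻¹ *ᵥ fun s => coeff (q * N + s) f) j, ?_⟩
  ext n
  obtain ⟨q, s, rfl⟩ : ∃ q, ∃ s : Fin N, n = q * N + s :=
    ⟨n / N, ⟨n % N, Nat.mod_lt n (Nat.pos_of_ne_zero hN)⟩, (Nat.div_add_mod' n N).symm⟩
  rw [coeff_sum_one_add_X_pow_mul_expand]
  simp [Matrix.mulVec_mulVec, Matrix.mul_nonsing_inv _ isUnit_det_binomialMatrix]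

theorem X_pow_dvd_of_X_pow_mul_dvd_sum_one_add_X_pow_mul_expand {K : ℕ} (a : Fin N → A⟦X⟧)
    (h : X ^ (K * N) ∣ ∑ j : Fin N, (1 + X) ^ (j : ℕ) * expand N hN (a j)) (j : Fin N) :
    X ^ K ∣ a j := by
  refine X_pow_dvd_iff.mpr fun q hq => ?_
  have hzero : (binomialMatrix A N *ᵥ fun j => coeff q (a j)) = 0 := by
    ext s
    rw [← coeff_sum_one_add_X_pow_mul_expand]
    exact X_pow_dvd_iff.mp h _ (by nlinarith [s.2, (q * N + s).lt_succ_self])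
  have := congrArg ((binomialMatrix A N)⁻¹ *ᵥ ·) hzero
  simpa [Matrix.mulVec_mulVec, Matrix.nonsing_inv_mul _ isUnit_det_binomialMatrix] using
    congrFun this j

instance charP {p : ℕ} [CharP A p] : CharP A⟦X⟧ p :=
  charP_of_injective_ringHom C_injective p

theorem expand_one_add_X_pow {p : ℕ} [Fact p.Prime] [CharP A p] (d j : ℕ) :
    expand (p ^ d) (NeZero.ne _) ((1 + X : A⟦X⟧) ^ j) = (1 + X) ^ (j * p ^ d) := by
  rw [map_pow, map_add, map_one, expand_X, ← one_pow (p ^ d), ← add_pow_char_pow, one_pow,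
    ← pow_mul, mul_comm]

end PowerSeries

theorem expandP_eq_expand {p : ℕ} {E : Type*} [Field E] (hp : p ≠ 0) (f : E⟦X⟧) :
    expandP p E f = expand p hp f := by
  ext n
  simp [expandP, coeff_expand]

namespace Iset

variable {p : ℕ}

def ofLevel (M : ℕ) (j : Fin (p ^ M)) : Iset p := ⟨(j : ℚ) / (p : ℚ) ^ M, M, j, j.2, rfl⟩

theorem ofLevel_injective [NeZero p] (M : ℕ) : Function.Injective (ofLevel (p := p) M) := by
  intro j j' h
  have := congrArg Subtype.val h
  simp only [ofLevel] at this
  exact Fin.ext (by exact_mod_cast (div_left_inj' (pow_ne_zero M (by simp [NeZero.ne p]))).mp this)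

theorem exists_ofLevel_eq_of_le [NeZero p] (i : Iset p) {M : ℕ} (hM : i.2.choose ≤ M) :
    ∃ j, ofLevel M j = i := by
  obtain ⟨j, hj, hi⟩ := i.2.choose_spec
  set m := i.2.choose
  refine ⟨⟨j * p ^ (M - m), ?_⟩, Subtype.ext ?_⟩
  · calc j * p ^ (M - m) < p ^ m * p ^ (M - m) := by gcongr; exact Nat.pos_of_neZero _
      _ = p ^ M := by rw [← pow_add, Nat.add_sub_cancel' hM]
  · rw [hi, ofLevel]
    have hp : (p : ℚ) ≠ 0 := by simp [NeZero.ne p]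
    field_simp
    push_cast
    rw [mul_assoc, ← pow_add, Nat.sub_add_cancel hM, mul_comm]

theorem exists_common_level [NeZero p] (t : Finset (Iset p)) :
    ∃ M, ∀ i ∈ t, ∃ j, ofLevel M j = i :=
  ⟨t.sup fun i => i.2.choose, fun i hi =>
    exists_ofLevel_eq_of_le i (Finset.le_sup (f := fun i => i.2.choose) hi)⟩

end Iset

section Model

variable {p : ℕ} {E : Type*} [Field E] {R : Type*} [CommRing R]

/-- `ι n` models the inclusion `E⟦X^{1/p^n}⟧ ⊆ Ẽ⁺`, the variable `X` of its source standing for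
`X^{1/p^n}`. -/
def IsExpandCompatible (p : ℕ) (ι : ℕ → E⟦X⟧ →+* R) : Prop :=
  ∀ n f, ι n f = ι (n + 1) (expandP p E f)

def IsXAdicOnLevels (p : ℕ) (v : R → EReal) (ι : ℕ → E⟦X⟧ →+* R) : Prop :=
  ∀ n f (c : ℕ), X ^ c ∣ f ↔ (((c : ℝ) / (p : ℝ) ^ n : ℝ) : EReal) ≤ v (ι n f)

variable {v : R → EReal} {ι : ℕ → E⟦X⟧ →+* R}

namespace IsExpandCompatible

variable (hι : IsExpandCompatible p ι)
include hι

theorem eq_expand [NeZero p] (n d : ℕ) (f : E⟦X⟧) :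
    ι n f = ι (n + d) (expand (p ^ d) (NeZero.ne _) f) := by
  induction d with
  | zero => simp
  | succ d ih =>
    rw [ih, hι, expandP_eq_expand (NeZero.ne p), ← expand_mul]
    simp [pow_succ', add_assoc]

theorem iota_one_add_X_pow_eq [Fact p.Prime] [CharP E p] {m m' j j' : ℕ}
    (h : (j : ℚ) / (p : ℚ) ^ m = (j' : ℚ) / (p : ℚ) ^ m') :
    ι m ((1 + X) ^ j) = ι m' ((1 + X) ^ j') := by
  have hp : (p : ℚ) ≠ 0 := by simp [(Fact.out : p.Prime).ne_zero]
  have hjj : j * p ^ m' = j' * p ^ m := by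
    field_simp at h
    rw [mul_comm j']
    exact_mod_cast h
  rw [hι.eq_expand m m', hι.eq_expand m' m, expand_one_add_X_pow, expand_one_add_X_pow,
    hjj, add_comm]

theorem onePlusXRat_ofLevel [Fact p.Prime] [CharP E p] (M : ℕ) (j : Fin (p ^ M)) :
    onePlusXRat ι (Iset.ofLevel M j) = ι M ((1 + X) ^ (j : ℕ)) :=
  hι.iota_one_add_X_pow_eq (Iset.ofLevel M j).2.choose_spec.choose_spec.2.symm

theorem sum_ofLevel [Fact p.Prime] [CharP E p] (M : ℕ) (c : Fin (p ^ M) → E⟦X⟧) :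
    ∑ j, onePlusXRat ι (Iset.ofLevel M j) * ι 0 (c j) =
      ι M (∑ j : Fin (p ^ M), (1 + X) ^ (j : ℕ) * expand (p ^ M) (NeZero.ne _) (c j)) := by
  simp only [map_sum, map_mul, hι.onePlusXRat_ofLevel, hι.eq_expand 0 M, zero_add]

end IsExpandCompatible

namespace IsXAdicOnLevels

variable (hv : IsXAdicOnLevels p v ι)
include hv

theorem nonneg (n : ℕ) (f : E⟦X⟧) : 0 ≤ v (ι n f) := by
  simpa using (hv n f 0).mp (by simp)

theorem X_pow_mul_dvd_iff [NeZero p] (K M : ℕ) (f : E⟦X⟧) :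
    X ^ (K * p ^ M) ∣ f ↔ ((K : ℝ) : EReal) ≤ v (ι M f) := by
  rw [hv M f]
  push_cast
  rw [mul_div_cancel_right₀ _ (pow_ne_zero M (by simp [NeZero.ne p])), EReal.coe_natCast]

end IsXAdicOnLevels

theorem v_neg (hv_mul : ∀ x y : R, v (x * y) = v x + v y) (h : 0 ≤ v (-1)) (y : R) :
    v (-y) = v y := by
  apply le_antisymm
  · calc v (-y) ≤ v (-1) + v (-y) := le_add_of_nonneg_left h
      _ = v y := by rw [← hv_mul, neg_one_mul, neg_neg]
  · calc v y ≤ v (-1) + v y := le_add_of_nonneg_left h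
      _ = v (-y) := by rw [← hv_mul, neg_one_mul]

theorem le_v_sub (hv_add : ∀ x y : R, min (v x) (v y) ≤ v (x + y)) (hv_neg : ∀ y, v (-y) = v y)
    {c : EReal} {a b : R} (ha : c ≤ v a) (hb : c ≤ v b) : c ≤ v (a - b) := by
  rw [sub_eq_add_neg]
  exact (le_min ha ((hv_neg b).symm ▸ hb)).trans (hv_add a (-b))

theorem le_v_sum (hv_zero : v 0 = ⊤)
    (hv_add : ∀ x y : R, min (v x) (v y) ≤ v (x + y)) {α : Type*} {c : EReal}
    (t : Finset α) (f : α → R) (h : ∀ i ∈ t, c ≤ v (f i)) : c ≤ v (∑ i ∈ t, f i) := by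
  induction t using Finset.cons_induction with
  | empty => simp [hv_zero]
  | cons i t hi ih =>
    rw [Finset.sum_cons]
    exact (le_min (h i (t.mem_cons_self i)) (ih fun j hj => h j (Finset.mem_cons_of_mem hj))).trans
      (hv_add _ _)

theorem le_v_sum_onePlusXRat_mul (hv_zero : v 0 = ⊤)
    (hv_add : ∀ x y : R, min (v x) (v y) ≤ v (x + y)) (hv_mul : ∀ x y : R, v (x * y) = v x + v y)
    (hv : IsXAdicOnLevels p v ι) {c : EReal} (t : Finset (Iset p)) (b : Iset p → E⟦X⟧)
    (h : ∀ i ∈ t, c ≤ v (ι 0 (b i))) : c ≤ v (∑ i ∈ t, onePlusXRat ι i * ι 0 (b i)) :=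
  le_v_sum hv_zero hv_add t _ fun i hi => by
    rw [hv_mul]
    exact (h i hi).trans (le_add_of_nonneg_left (hv.nonneg _ _))

def HasExpansion (v : R → EReal) (ι : ℕ → E⟦X⟧ →+* R) (a : Iset p → E⟦X⟧) (x : R) : Prop :=
  ∀ r : ℝ, ∃ s : Finset (Iset p), ∀ t, s ⊆ t →
    (r : EReal) ≤ v (x - ∑ i ∈ t, onePlusXRat ι i * ι 0 (a i))

theorem HasExpansion.iInf_le (hv_zero : v 0 = ⊤)
    (hv_add : ∀ x y : R, min (v x) (v y) ≤ v (x + y)) (hv_mul : ∀ x y : R, v (x * y) = v x + v y)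
    (hv : IsXAdicOnLevels p v ι) {a : Iset p → E⟦X⟧} {x : R} (ha : HasExpansion v ι a x) :
    ⨅ i, v (ι 0 (a i)) ≤ v x := by
  by_contra! hlt
  obtain ⟨r, hxr, hr⟩ := EReal.exists_between_coe_real hlt
  obtain ⟨s, hs⟩ := ha r
  have hpartial :=
    le_v_sum_onePlusXRat_mul hv_zero hv_add hv_mul hv s a fun i _ => _root_.iInf_le _ i
  refine hxr.not_ge ?_
  calc (r : EReal) ≤ min (v (x - ∑ i ∈ s, onePlusXRat ι i * ι 0 (a i)))
        (v (∑ i ∈ s, onePlusXRat ι i * ι 0 (a i))) := le_min (hs s le_rfl) (hr.le.trans hpartial)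
    _ ≤ v x := (hv_add _ _).trans_eq (by rw [sub_add_cancel])

variable [Fact p.Prime] [CharP E p]

theorem X_pow_dvd_of_le_v_sum (hι : IsExpandCompatible p ι) (hv : IsXAdicOnLevels p v ι)
    (t : Finset (Iset p)) (b : Iset p → E⟦X⟧) (K : ℕ)
    (h : ((K : ℝ) : EReal) ≤ v (∑ i ∈ t, onePlusXRat ι i * ι 0 (b i))) :
    ∀ i ∈ t, X ^ K ∣ b i := by
  classical
  -- at a level `M` containing `t` the sum is `ι M` of a finite expansion in `E⟦X⟧`
  obtain ⟨M, hM⟩ := Iset.exists_common_level t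
  set c : Fin (p ^ M) → E⟦X⟧ := fun j => if Iset.ofLevel M j ∈ t then b (Iset.ofLevel M j) else 0
  have hsum : ∑ i ∈ t, onePlusXRat ι i * ι 0 (b i) =
      ∑ j, onePlusXRat ι (Iset.ofLevel M j) * ι 0 (c j) := by
    rw [← Finset.sum_preimage _ t (Iset.ofLevel_injective M).injOn _
      fun i hi hni => absurd (hM i hi) (by simpa using hni)]
    refine Finset.sum_subset_zero_on_sdiff (Finset.subset_univ _) (fun j hj => ?_)
      fun j hj => ?_ <;> simp_all [c]
  rw [hsum, hι.sum_ofLevel, ← hv.X_pow_mul_dvd_iff] at h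
  intro i hi
  obtain ⟨j, rfl⟩ := hM i hi
  simpa [c, hi] using X_pow_dvd_of_X_pow_mul_dvd_sum_one_add_X_pow_mul_expand _ c h j

theorem exists_finset_expansion (hι : IsExpandCompatible p ι) (n : ℕ) (f : E⟦X⟧) :
    ∃ (s : Finset (Iset p)) (c : Iset p → E⟦X⟧), (∀ i ∉ s, c i = 0) ∧
      ι n f = ∑ i ∈ s, onePlusXRat ι i * ι 0 (c i) := by
  obtain ⟨a, rfl⟩ := exists_eq_sum_one_add_X_pow_mul_expand (NeZero.ne (p ^ n)) f
  refine ⟨Finset.univ.map ⟨_, Iset.ofLevel_injective n⟩, Function.extend (Iset.ofLevel n) a 0,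
    fun i hi => Function.extend_apply' _ _ _ fun ⟨j, hj⟩ => hi (by simp [← hj]), ?_⟩
  rw [← hι.sum_ofLevel, Finset.sum_map]
  simp [(Iset.ofLevel_injective n).extend_apply]

theorem exists_hasExpansion (hv_zero : v 0 = ⊤)
    (hv_add : ∀ x y : R, min (v x) (v y) ≤ v (x + y)) (hv_mul : ∀ x y : R, v (x * y) = v x + v y)
    (hv_neg : ∀ y, v (-y) = v y) (hι : IsExpandCompatible p ι) (hv : IsXAdicOnLevels p v ι)
    (hdense : ∀ (x : R) (r : ℝ), ∃ (n : ℕ) (f : E⟦X⟧), (r : EReal) ≤ v (x - ι n f)) (x : R) :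
    ∃ a : Iset p → E⟦X⟧,
      (∀ r : ℝ, {i | ¬ (r : EReal) ≤ v (ι 0 (a i))}.Finite) ∧ HasExpansion v ι a x := by
  have approx : ∀ k : ℕ, ∃ (s : Finset (Iset p)) (c : Iset p → E⟦X⟧), (∀ i ∉ s, c i = 0) ∧
      ((k : ℝ) : EReal) ≤ v (x - ∑ i ∈ s, onePlusXRat ι i * ι 0 (c i)) := by
    intro k
    obtain ⟨n, f, hf⟩ := hdense x k
    obtain ⟨s, c, hc, hfs⟩ := exists_finset_expansion hι n f
    exact ⟨s, c, hc, hfs ▸ hf⟩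
  choose s c hc hx using approx
  have hsum : ∀ k t, s k ⊆ t → ∑ i ∈ t, onePlusXRat ι i * ι 0 (c k i) =
      ∑ i ∈ s k, onePlusXRat ι i * ι 0 (c k i) := fun k t hst =>
    (Finset.sum_subset hst fun i _ hi => by simp [hc k i hi]).symm
  have hcauchy : ∀ k i, X ^ k ∣ c (k + 1) i - c k i := by
    intro k i
    set t := insert i (s k ∪ s (k + 1))
    refine X_pow_dvd_of_le_v_sum hι hv t (fun j => c (k + 1) j - c k j) k ?_ i
      (Finset.mem_insert_self _ _)
    have hdiff : ∑ j ∈ t, onePlusXRat ι j * ι 0 (c (k + 1) j - c k j) =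
        (x - ∑ j ∈ s k, onePlusXRat ι j * ι 0 (c k j)) -
          (x - ∑ j ∈ s (k + 1), onePlusXRat ι j * ι 0 (c (k + 1) j)) := by
      rw [← hsum k t (by grind), ← hsum (k + 1) t (by grind)]
      simp only [map_sub, mul_sub, Finset.sum_sub_distrib]
      ring
    rw [hdiff]
    exact le_v_sub hv_add hv_neg (hx k) ((hx (k + 1)).trans' (by exact_mod_cast k.le_succ))
  choose a ha using fun i => exists_forall_X_pow_dvd_sub (fun k => c k i) fun k => hcauchy k i
  have hca : ∀ (k : ℕ) i, ((k : ℝ) : EReal) ≤ v (ι 0 (c k i - a i)) := fun k i =>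
    (hv.X_pow_mul_dvd_iff k 0 _).mp (by simpa [dvd_sub_comm] using ha i k)
  refine ⟨a, fun r => ?_, fun r => ?_⟩ <;> obtain ⟨k, hk⟩ := exists_nat_ge r
  · refine (s k).finite_toSet.subset fun i hi => ?_
    by_contra hni
    exact hi ((EReal.coe_le_coe_iff.mpr hk).trans (by simpa [hc k i hni, hv_neg] using hca k i))
  · refine ⟨s k, fun t hst => (EReal.coe_le_coe_iff.mpr hk).trans ?_⟩
    have hsplit : x - ∑ i ∈ t, onePlusXRat ι i * ι 0 (a i) =
        (x - ∑ i ∈ s k, onePlusXRat ι i * ι 0 (c k i)) +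
          ∑ i ∈ t, onePlusXRat ι i * ι 0 (c k i - a i) := by
      rw [← hsum k t hst]
      simp only [map_sub, mul_sub, Finset.sum_sub_distrib]
      ring
    rw [hsplit]
    exact (le_min (hx k) (le_v_sum_onePlusXRat_mul hv_zero hv_add hv_mul hv t _
      fun i _ => hca k i)).trans (hv_add _ _)

namespace HasExpansion

variable {a : Iset p → E⟦X⟧} {x : R}

theorem unique (hv_add : ∀ x y : R, min (v x) (v y) ≤ v (x + y)) (hv_neg : ∀ y, v (-y) = v y)
    (hι : IsExpandCompatible p ι) (hv : IsXAdicOnLevels p v ι) {b : Iset p → E⟦X⟧}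
    (ha : HasExpansion v ι a x) (hb : HasExpansion v ι b x) : a = b := by
  funext i
  refine sub_eq_zero.mp (PowerSeries.ext fun n => ?_)
  obtain ⟨s₁, hs₁⟩ := ha (n + 1 : ℕ)
  obtain ⟨s₂, hs₂⟩ := hb (n + 1 : ℕ)
  set t := insert i (s₁ ∪ s₂)
  have hdiff : ∑ j ∈ t, onePlusXRat ι j * ι 0 (a j - b j) =
      (x - ∑ j ∈ t, onePlusXRat ι j * ι 0 (b j)) - (x - ∑ j ∈ t, onePlusXRat ι j * ι 0 (a j)) := by
    simp only [map_sub, mul_sub, Finset.sum_sub_distrib]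
    ring
  have hdvd := X_pow_dvd_of_le_v_sum hι hv t _ (n + 1)
    (hdiff ▸ le_v_sub hv_add hv_neg (hs₂ t (by grind)) (hs₁ t (by grind))) i
    (Finset.mem_insert_self _ _)
  simpa using X_pow_dvd_iff.mp hdvd n n.lt_succ_self

theorem lt_iInf_add_one (hv_eq_top : ∀ x : R, v x = ⊤ → x = 0)
    (hv_add : ∀ x y : R, min (v x) (v y) ≤ v (x + y)) (hv_neg : ∀ y, v (-y) = v y)
    (hι : IsExpandCompatible p ι) (hv : IsXAdicOnLevels p v ι) (ha : HasExpansion v ι a x)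
    (hx : x ≠ 0) : v x < (⨅ i, v (ι 0 (a i))) + 1 := by
  have ha₀ : a ≠ 0 := by
    rintro rfl
    refine hx (hv_eq_top x ((EReal.eq_top_iff_forall_lt _).mpr fun r => ?_))
    obtain ⟨s, hs⟩ := ha (r + 1)
    simpa using (EReal.coe_lt_coe_iff.mpr (lt_add_one r)).trans_le (hs s le_rfl)
  obtain ⟨c, i₀, hc, hi₀⟩ := exists_X_pow_dvd_and_not_dvd_succ ha₀
  have hvx : v x < ((c + 1 : ℕ) : ℝ) := by
    by_contra! hle
    obtain ⟨s, hs⟩ := ha (c + 1 : ℕ)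
    set t := insert i₀ s
    refine hi₀ (X_pow_dvd_of_le_v_sum hι hv t a (c + 1) ?_ i₀ (Finset.mem_insert_self _ _))
    rw [← sub_sub_cancel x (∑ i ∈ t, onePlusXRat ι i * ι 0 (a i))]
    exact le_v_sub hv_add hv_neg hle (hs t (Finset.subset_insert _ _))
  have hcinf : ((c : ℝ) : EReal) ≤ ⨅ i, v (ι 0 (a i)) :=
    le_iInf fun i => (hv.X_pow_mul_dvd_iff c 0 _).mp (by simpa using hc i)
  calc v x < ((c : ℝ) : EReal) + 1 := by simpa using hvx
    _ ≤ (⨅ i, v (ι 0 (a i))) + 1 := add_le_add_left hcinf 1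

end HasExpansion

end Model

theorem colmez_expansion_general
    {p : ℕ} [Fact p.Prime] {E : Type*} [Field E] [CharP E p]
    {R : Type*} [CommRing R]
    (v : R → EReal) (ι : ℕ → PowerSeries E →+* R)
    (hv_top : ∀ x : R, v x = ⊤ ↔ x = 0)
    (hv_add : ∀ x y : R, min (v x) (v y) ≤ v (x + y))
    (hv_mul : ∀ x y : R, v (x * y) = v x + v y)
    (hcompat : ∀ (n : ℕ) (f : PowerSeries E), ι n f = ι (n + 1) (expandP p E f))
    (hv_iota : ∀ (n : ℕ) (f : PowerSeries E) (c : ℕ),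
      ((X : PowerSeries E) ^ c ∣ f) ↔ (((c : ℝ) / (p : ℝ) ^ n : ℝ) : EReal) ≤ v (ι n f))
    (hdense : ∀ (x : R) (r : ℝ), ∃ (n : ℕ) (f : PowerSeries E), (r : EReal) ≤ v (x - ι n f))
    (x : R) :
    (∃! a : Iset p → PowerSeries E,
      (∀ r : ℝ, {i : Iset p | ¬ (r : EReal) ≤ v (ι 0 (a i))}.Finite) ∧
      (∀ r : ℝ, ∃ s : Finset (Iset p), ∀ t : Finset (Iset p), s ⊆ t →
        (r : EReal) ≤ v (x - ∑ i ∈ t, onePlusXRat ι i * ι 0 (a i)))) ∧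
    (∀ a : Iset p → PowerSeries E,
      ((∀ r : ℝ, {i : Iset p | ¬ (r : EReal) ≤ v (ι 0 (a i))}.Finite) ∧
       (∀ r : ℝ, ∃ s : Finset (Iset p), ∀ t : Finset (Iset p), s ⊆ t →
         (r : EReal) ≤ v (x - ∑ i ∈ t, onePlusXRat ι i * ι 0 (a i)))) →
      (⨅ i : Iset p, v (ι 0 (a i))) ≤ v x ∧
        (x ≠ 0 → v x < (⨅ i : Iset p, v (ι 0 (a i))) + 1)) := by
  have hι : IsExpandCompatible p ι := hcompat
  have hv : IsXAdicOnLevels p v ι := hv_iota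
  have hv_zero : v 0 = ⊤ := (hv_top 0).mpr rfl
  have hv_neg : ∀ y, v (-y) = v y := v_neg hv_mul (by simpa using hv.nonneg 0 (-1))
  obtain ⟨a, ha₀, ha⟩ := exists_hasExpansion hv_zero hv_add hv_mul hv_neg hι hv hdense x
  refine ⟨⟨a, ⟨ha₀, ha⟩, fun b hb => HasExpansion.unique hv_add hv_neg hι hv hb.2 ha⟩,
    fun b hb => ⟨HasExpansion.iInf_le hv_zero hv_add hv_mul hv hb.2,
      HasExpansion.lt_iInf_add_one (fun y => (hv_top y).mp) hv_add hv_neg hι hv hb.2⟩⟩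

/-- Colmez's expansion (prop `colmet+`): in a model `R` of `Ẽ⁺`, every `f ∈ Ẽ⁺` can be
written uniquely as `f = ∑_{i ∈ I} (1+X)^i a_i(f)` with `a_i(f) ∈ E[[X]]`, `a_i(f) → 0`;
moreover `val_X f - 1 < inf_i val_X (a_i f) ≤ val_X f`. -/
theorem colmez_expansion
    {p : ℕ} [Fact p.Prime] {E : Type*} [Field E] [CharP E p]
    {R : Type*} [CommRing R]
    (v : R → EReal) (ι : ℕ → PowerSeries E →+* R)
    (hv_top : ∀ x : R, v x = ⊤ ↔ x = 0)
    (hv_add : ∀ x y : R, min (v x) (v y) ≤ v (x + y))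
    (hv_mul : ∀ x y : R, v (x * y) = v x + v y)
    (hcompat : ∀ (n : ℕ) (f : PowerSeries E), ι n f = ι (n + 1) (expandP p E f))
    (hv_iota : ∀ (n : ℕ) (f : PowerSeries E) (c : ℕ),
      ((X : PowerSeries E) ^ c ∣ f) ↔ (((c : ℝ) / (p : ℝ) ^ n : ℝ) : EReal) ≤ v (ι n f))
    (hdense : ∀ (x : R) (r : ℝ), ∃ (n : ℕ) (f : PowerSeries E), (r : EReal) ≤ v (x - ι n f))
    (hcomplete : ∀ u : ℕ → R,
      (∀ r : ℝ, ∃ N : ℕ, ∀ j ≥ N, ∀ j' ≥ N, (r : EReal) ≤ v (u j - u j')) →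
      ∃ x : R, Tendsto (fun j => v (x - u j)) atTop (𝓝 ⊤))
    (x : R) :
    (∃! a : Iset p → PowerSeries E,
      (∀ r : ℝ, {i : Iset p | ¬ (r : EReal) ≤ v (ι 0 (a i))}.Finite) ∧
      (∀ r : ℝ, ∃ s : Finset (Iset p), ∀ t : Finset (Iset p), s ⊆ t →
        (r : EReal) ≤ v (x - ∑ i ∈ t, onePlusXRat ι i * ι 0 (a i)))) ∧
    (∀ a : Iset p → PowerSeries E,
      ((∀ r : ℝ, {i : Iset p | ¬ (r : EReal) ≤ v (ι 0 (a i))}.Finite) ∧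
       (∀ r : ℝ, ∃ s : Finset (Iset p), ∀ t : Finset (Iset p), s ⊆ t →
         (r : EReal) ≤ v (x - ∑ i ∈ t, onePlusXRat ι i * ι 0 (a i)))) →
      (⨅ i : Iset p, v (ι 0 (a i))) ≤ v x ∧
        (x ≠ 0 → v x < (⨅ i : Iset p, v (ι 0 (a i))) + 1)) :=
  colmez_expansion_general v ι hv_top hv_add hv_mul hcompat hv_iota hdense x
end

section
/- Let E = E((X)) (notation: 𝐄 = E((X)), field of Laurent series over a characteristic-p field), with Γ_k = 1+p^k Z_p acting continuously and semi-linearly on a finite-dimensional 𝐄-vector space M. Then there exists an E[[X]]-lattice in M that is stable under Γ_k. -/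
open PowerSeries

/-- The `X`-adic valuation on `E((X))`. -/
noncomputable def latval {E : Type*} [Field E] (f : LaurentSeries E) : EReal :=
  ⨅ j : f.support, (((j : ℤ) : ℝ) : EReal)

/-- The valuation on `M` attached to a basis `e` (min of the valuations of coordinates). -/
noncomputable def basval {E : Type*} [Field E] {M : Type*} [AddCommGroup M]
    [Module (LaurentSeries E) M] {d : ℕ} (e : Module.Basis (Fin d) (LaurentSeries E) M)
    (x : M) : EReal :=
  ⨅ i : Fin d, latval (e.repr x i)


/-! Continuity of the action at `1` gives an `i` such that `Γ_{k+i}` moves each basis vector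
`e j` only within the standard lattice `L₀ = ⊕ E[[X]] e j`; since `σ` preserves the valuation,
hence `E[[X]]`, the group `Γ_{k+i}` stabilises `L₀`. As `Γ_{k+i}` has finite index in `Γ_k`, the
`E[[X]]`-span of the `Γ_k`-orbit of the basis is already spanned by the finitely many vectors
`ρ g e j` with `g` running over coset representatives; it is a `Γ_k`-stable lattice. -/

namespace PadicInt

/-- `Γ_n = 1 + p^n ℤ_p`, as a subgroup of `ℤ_pˣ`. -/
def principalUnits (p : ℕ) [Fact p.Prime] (n : ℕ) : Subgroup ℤ_[p]ˣ where
  carrier := {g | ∃ b, (g : ℤ_[p]) = 1 + (p : ℤ_[p]) ^ n * b}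
  one_mem' := ⟨0, by simp⟩
  mul_mem' := by
    rintro g h ⟨a, ha⟩ ⟨b, hb⟩
    exact ⟨a + b + (p : ℤ_[p]) ^ n * (a * b), by rw [Units.val_mul, ha, hb]; ring⟩
  inv_mem' := by
    rintro g ⟨b, hb⟩
    refine ⟨-(↑g⁻¹ * b), ?_⟩
    linear_combination -(↑g⁻¹ : ℤ_[p]) * hb + g.inv_mul

variable {p : ℕ} [Fact p.Prime]

theorem ker_toZModPow_le_principalUnits (n : ℕ) :
    (Units.map (toZModPow n : ℤ_[p] →+* ZMod (p ^ n)).toMonoidHom).ker ≤ principalUnits p n := by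
  intro g hg
  have : (g : ℤ_[p]) - 1 ∈ RingHom.ker (toZModPow n : ℤ_[p] →+* ZMod (p ^ n)) := by
    rw [RingHom.mem_ker, map_sub, map_one, sub_eq_zero]
    exact congrArg Units.val hg
  obtain ⟨b, hb⟩ := Ideal.mem_span_singleton.1 (ker_toZModPow (p := p) n ▸ this)
  exact ⟨b, by linear_combination hb⟩

instance (n : ℕ) : (principalUnits p n).FiniteIndex :=
  Subgroup.finiteIndex_of_le (ker_toZModPow_le_principalUnits n)

theorem principalUnits_antitone : Antitone (principalUnits p) := by
  intro m n hmn g ⟨b, hb⟩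
  exact ⟨(p : ℤ_[p]) ^ (n - m) * b, by rw [hb, ← mul_assoc, ← pow_add, Nat.add_sub_cancel' hmn]⟩

end PadicInt

theorem Subgroup.exists_fin_cover_of_finiteIndex {G : Type*} [Group G] (K H : Subgroup G)
    [H.FiniteIndex] :
    ∃ (n : ℕ) (g : Fin n → G), (∀ t, g t ∈ K) ∧ ∀ x ∈ K, ∃ t, (g t)⁻¹ * x ∈ H := by
  let eQ := Finite.equivFin (K ⧸ H.subgroupOf K)
  refine ⟨_, fun t => ((eQ.symm t).out : G), fun t => (eQ.symm t).out.2, fun x hx => ?_⟩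
  refine ⟨eQ (⟨x, hx⟩ : K), ?_⟩
  simp only [Equiv.symm_apply_apply]
  exact Subgroup.mem_subgroupOf.1 (QuotientGroup.eq.1 (QuotientGroup.out_eq' _))

section LaurentSeries

variable {E : Type*} [Field E] {M : Type*} [AddCommGroup M] [Module (LaurentSeries E) M]

theorem latval_zero : latval (0 : LaurentSeries E) = ⊤ := by
  simp [latval]

theorem basval_zero {d : ℕ} (e : Module.Basis (Fin d) (LaurentSeries E) M) : basval e 0 = ⊤ := by
  simp [basval, latval_zero]

theorem zero_le_latval_iff {f : LaurentSeries E} : 0 ≤ latval f ↔ ∀ j ∈ f.support, 0 ≤ j := by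
  simp [latval, le_iInf_iff]

theorem zero_le_latval_iff_exists_ofPowerSeries {f : LaurentSeries E} :
    0 ≤ latval f ↔ ∃ c : PowerSeries E, f = HahnSeries.ofPowerSeries ℤ E c := by
  rw [zero_le_latval_iff]
  constructor
  · intro h
    refine ⟨PowerSeries.mk fun n => f.coeff n, ?_⟩
    ext j
    rw [PowerSeries.coeff_coe]
    split_ifs with hj
    · by_contra hne
      exact absurd (h j (HahnSeries.mem_support f j |>.2 hne)) (by omega)
    · simp [abs_of_nonneg (not_lt.1 hj)]
  · rintro ⟨c, rfl⟩ j hj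
    by_contra hneg
    exact hj (by simp [PowerSeries.coeff_coe, not_le.1 hneg])

end LaurentSeries

section PowerSeriesSpan

variable {E : Type*} [Field E] {M : Type*} [AddCommGroup M] [Module (LaurentSeries E) M]
  {ι : Type*} [Fintype ι]

variable (E) in
def powerSeriesSpan (v : ι → M) : AddSubmonoid M where
  carrier := {x | ∃ c : ι → PowerSeries E, x = ∑ i, HahnSeries.ofPowerSeries ℤ E (c i) • v i}
  zero_mem' := ⟨0, by simp⟩
  add_mem' := by
    rintro _ _ ⟨a, rfl⟩ ⟨b, rfl⟩
    exact ⟨a + b, by simp only [Pi.add_apply, map_add, add_smul, Finset.sum_add_distrib]⟩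

theorem ofPowerSeries_smul_mem_powerSeriesSpan {v : ι → M} (a : PowerSeries E) {x : M}
    (hx : x ∈ powerSeriesSpan E v) : HahnSeries.ofPowerSeries ℤ E a • x ∈ powerSeriesSpan E v := by
  obtain ⟨c, rfl⟩ := hx
  exact ⟨fun i => a * c i, by simp only [Finset.smul_sum, map_mul, smul_smul]⟩

theorem mem_powerSeriesSpan_self [DecidableEq ι] (v : ι → M) (i : ι) :
    v i ∈ powerSeriesSpan E v :=
  ⟨Pi.single i 1, by simp [Pi.single_apply]⟩

theorem powerSeriesSpan_le {κ : Type*} [Fintype κ] {v : ι → M} {w : κ → M}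
    (h : ∀ i, v i ∈ powerSeriesSpan E w) : powerSeriesSpan E v ≤ powerSeriesSpan E w := by
  rintro _ ⟨c, rfl⟩
  exact sum_mem fun i _ => ofPowerSeries_smul_mem_powerSeriesSpan (c i) (h i)

theorem powerSeriesSpan_le_span (v : ι → M) :
    (powerSeriesSpan E v : Set M) ⊆ Submodule.span (LaurentSeries E) (Set.range v) := by
  rintro _ ⟨c, rfl⟩
  exact Submodule.sum_mem _ fun i _ => Submodule.smul_mem _ _ (Submodule.subset_span ⟨i, rfl⟩)

theorem map_mem_powerSeriesSpan {N : Type*} [AddCommGroup N] [Module (LaurentSeries E) N]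
    {F : Type*} [FunLike F M N] [AddMonoidHomClass F M N] (f : F)
    (τ : LaurentSeries E → LaurentSeries E)
    (hτ : ∀ a : PowerSeries E, ∃ b, τ (HahnSeries.ofPowerSeries ℤ E a) =
      HahnSeries.ofPowerSeries ℤ E b)
    (hf : ∀ (c : LaurentSeries E) (x : M), f (c • x) = τ c • f x)
    {v : ι → M} {x : M} (hx : x ∈ powerSeriesSpan E v) :
    f x ∈ powerSeriesSpan E (fun i => f (v i)) := by
  obtain ⟨c, rfl⟩ := hx
  choose c' hc' using fun i => hτ (c i)
  exact ⟨c', by simp only [map_sum, hf, hc']⟩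

theorem mem_powerSeriesSpan_of_zero_le_basval {d : ℕ}
    (e : Module.Basis (Fin d) (LaurentSeries E) M) {x : M} (hx : 0 ≤ basval e x) :
    x ∈ powerSeriesSpan E e := by
  choose c hc using fun i =>
    zero_le_latval_iff_exists_ofPowerSeries.1 ((le_iInf_iff.1 hx) i)
  exact ⟨c, by simp only [← hc, e.sum_repr]⟩

end PowerSeriesSpan

theorem exists_stable_powerSeriesSpan {G : Type*} [Group G] (K H : Subgroup G) [H.FiniteIndex]
    {E : Type*} [Field E] {M : Type*} [AddCommGroup M] [Module (LaurentSeries E) M] {d : ℕ}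
    (e : Module.Basis (Fin d) (LaurentSeries E) M)
    (σ : G → (LaurentSeries E ≃+* LaurentSeries E)) (ρ : G → (M ≃+ M))
    (hρmul : ∀ g h, g ∈ K → h ∈ K → ∀ x, ρ (g * h) x = ρ g (ρ h x))
    (hσ : ∀ g ∈ K, ∀ a : PowerSeries E, ∃ b, σ g (HahnSeries.ofPowerSeries ℤ E a) =
      HahnSeries.ofPowerSeries ℤ E b)
    (hsemi : ∀ g ∈ K, ∀ (c : LaurentSeries E) (x : M), ρ g (c • x) = σ g c • ρ g x)
    (hH : ∀ h ∈ K ⊓ H, ∀ j, ρ h (e j) ∈ powerSeriesSpan E e) :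
    ∃ (r : ℕ) (gen : Fin r → M), Submodule.span (LaurentSeries E) (Set.range gen) = ⊤ ∧
      ∀ γ ∈ K, ∀ x ∈ powerSeriesSpan E gen, ρ γ x ∈ powerSeriesSpan E gen := by
  have hmap : ∀ g ∈ K, ∀ {r : ℕ} {v : Fin r → M} {x : M}, x ∈ powerSeriesSpan E v →
      ρ g x ∈ powerSeriesSpan E (fun i => ρ g (v i)) :=
    fun g hg _ _ _ => map_mem_powerSeriesSpan (ρ g) (σ g) (hσ g hg) (hsemi g hg)
  obtain ⟨n, g, hgK, hcover⟩ := K.exists_fin_cover_of_finiteIndex H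
  let gen : Fin (n * d) → M := fun t =>
    ρ (g (finProdFinEquiv.symm t).1) (e (finProdFinEquiv.symm t).2)
  have hgen : ∀ t j, ρ (g t) (e j) ∈ powerSeriesSpan E gen := fun t j => by
    simpa only [gen, Equiv.symm_apply_apply] using
      mem_powerSeriesSpan_self (E := E) gen (finProdFinEquiv (t, j))
  -- Writing `γ = g t * h` with `h ∈ H` puts the whole `K`-orbit of the basis into the lattice.
  have horbit : ∀ γ ∈ K, ∀ j, ρ γ (e j) ∈ powerSeriesSpan E gen := by
    intro γ hγ j
    obtain ⟨t, ht⟩ := hcover γ hγ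
    have hh : (g t)⁻¹ * γ ∈ K := K.mul_mem (K.inv_mem (hgK t)) hγ
    rw [← mul_inv_cancel_left (g t) γ, hρmul _ _ (hgK t) hh]
    exact powerSeriesSpan_le (hgen t) (hmap _ (hgK t) (hH _ ⟨hh, ht⟩ j))
  refine ⟨n * d, gen, ?_, fun γ hγ x hx => ?_⟩
  · have hρ1 : ∀ x, ρ 1 x = x := fun x =>
      (ρ 1).injective (by rw [← hρmul 1 1 K.one_mem K.one_mem, one_mul])
    rw [eq_top_iff, ← e.span_eq, Submodule.span_le]
    rintro _ ⟨j, rfl⟩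
    exact powerSeriesSpan_le_span gen (hρ1 (e j) ▸ horbit 1 K.one_mem j)
  · refine powerSeriesSpan_le (fun t => ?_) (hmap γ hγ hx)
    rw [← hρmul _ _ hγ (hgK _)]
    exact horbit _ (K.mul_mem hγ (hgK _)) _

theorem exists_stable_lattice_general
    {p : ℕ} [Fact p.Prime] {E : Type*} [Field E]
    {M : Type*} [AddCommGroup M] [Module (LaurentSeries E) M]
    (d : ℕ) (e : Module.Basis (Fin d) (LaurentSeries E) M)
    (k : ℕ)
    -- the semi-linear action: `σ` on `E((X))`, `ρ` on `M`, defined on `Γ_k`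
    (σ : ℤ_[p]ˣ → (LaurentSeries E ≃+* LaurentSeries E))
    (ρ : ℤ_[p]ˣ → (M ≃+ M))
    (hρmul : ∀ g h : ℤ_[p]ˣ, (∃ b, (g : ℤ_[p]) = 1 + (p : ℤ_[p]) ^ k * b) →
      (∃ b, (h : ℤ_[p]) = 1 + (p : ℤ_[p]) ^ k * b) →
      ∀ x : M, ρ (g * h) x = ρ g (ρ h x))
    (hσiso : ∀ g : ℤ_[p]ˣ, (∃ b, (g : ℤ_[p]) = 1 + (p : ℤ_[p]) ^ k * b) →
      ∀ f : LaurentSeries E, latval (σ g f) = latval f)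
    (hsemi : ∀ g : ℤ_[p]ˣ, (∃ b, (g : ℤ_[p]) = 1 + (p : ℤ_[p]) ^ k * b) →
      ∀ (c : LaurentSeries E) (x : M), ρ g (c • x) = σ g c • ρ g x)
    -- continuity of the action map `Γ_k × M → M`
    (hcont : ∀ (g₀ : ℤ_[p]ˣ), (∃ b, (g₀ : ℤ_[p]) = 1 + (p : ℤ_[p]) ^ k * b) →
      ∀ (x₀ : M) (N : ℝ), ∃ (i : ℕ) (δ : ℝ), ∀ (g : ℤ_[p]ˣ) (x : M),
        (∃ b, (g : ℤ_[p]) = 1 + (p : ℤ_[p]) ^ k * b) →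
        (∃ b, (g : ℤ_[p]) = (g₀ : ℤ_[p]) * (1 + (p : ℤ_[p]) ^ (k + i) * b)) →
        (δ : EReal) ≤ basval e (x - x₀) →
        (N : EReal) ≤ basval e (ρ g x - ρ g₀ x₀)) :
    ∃ (r : ℕ) (gen : Fin r → M),
      Submodule.span (LaurentSeries E) (Set.range gen) = ⊤ ∧
      ∀ (γ : ℤ_[p]ˣ), (∃ b, (γ : ℤ_[p]) = 1 + (p : ℤ_[p]) ^ k * b) →
        ∀ x : M, (∃ c : Fin r → PowerSeries E,
            x = ∑ i, HahnSeries.ofPowerSeries ℤ E (c i) • gen i) →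
          ∃ c : Fin r → PowerSeries E,
            ρ γ x = ∑ i, HahnSeries.ofPowerSeries ℤ E (c i) • gen i := by
  have hρ1 : ∀ x, ρ 1 x = x := fun x =>
    (ρ 1).injective (by rw [← hρmul 1 1 ⟨0, by simp⟩ ⟨0, by simp⟩, one_mul])
  have hσ : ∀ g ∈ PadicInt.principalUnits p k, ∀ a : PowerSeries E,
      ∃ b, σ g (HahnSeries.ofPowerSeries ℤ E a) = HahnSeries.ofPowerSeries ℤ E b :=
    fun g hg a => zero_le_latval_iff_exists_ofPowerSeries.1 <| by
      rw [hσiso g hg]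
      exact zero_le_latval_iff_exists_ofPowerSeries.2 ⟨a, rfl⟩
  have hnear : ∀ j, ∀ᶠ i in Filter.atTop,
      ∀ g ∈ PadicInt.principalUnits p k ⊓ PadicInt.principalUnits p (k + i),
        ρ g (e j) ∈ powerSeriesSpan E e := by
    intro j
    obtain ⟨i, δ, hi⟩ := hcont 1 ⟨0, by simp⟩ (e j) 0
    refine Filter.eventually_atTop.2 ⟨i, fun i' hi' g ⟨hgk, hgi'⟩ => ?_⟩
    obtain ⟨b, hb⟩ := PadicInt.principalUnits_antitone (by omega : k + i ≤ k + i') hgi'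
    have hmove := hi g (e j) hgk ⟨b, by rw [hb, Units.val_one, one_mul]⟩ (by simp [basval_zero])
    rw [hρ1] at hmove
    have hsub : ρ g (e j) - e j ∈ powerSeriesSpan E e :=
      mem_powerSeriesSpan_of_zero_le_basval e (mod_cast hmove)
    simpa only [sub_add_cancel] using add_mem hsub (mem_powerSeriesSpan_self e j)
  obtain ⟨i, hi⟩ := (Filter.eventually_all.2 hnear).exists
  exact exists_stable_powerSeriesSpan _ (PadicInt.principalUnits p (k + i)) e σ ρ hρmul hσ hsemi
    fun g hg j => hi j g hg

/-- Prop `gamlat`: if `Γ_k = 1 + p^k ℤ_p` acts continuously and semi-linearly on a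
finite-dimensional `E((X))`-vector space `M`, then there is a `Γ_k`-stable
`E[[X]]`-lattice in `M`. -/
theorem exists_stable_lattice
    {p : ℕ} [Fact p.Prime] {E : Type*} [Field E] [CharP E p]
    {M : Type*} [AddCommGroup M] [Module (LaurentSeries E) M]
    (d : ℕ) (e : Module.Basis (Fin d) (LaurentSeries E) M)
    (k : ℕ) (hk : 1 ≤ k) (hk2 : p = 2 → 2 ≤ k)
    -- the semi-linear action: `σ` on `E((X))`, `ρ` on `M`, defined on `Γ_k`
    (σ : ℤ_[p]ˣ → (LaurentSeries E ≃+* LaurentSeries E))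
    (ρ : ℤ_[p]ˣ → (M ≃+ M))
    (hσmul : ∀ g h : ℤ_[p]ˣ, (∃ b, (g : ℤ_[p]) = 1 + (p : ℤ_[p]) ^ k * b) →
      (∃ b, (h : ℤ_[p]) = 1 + (p : ℤ_[p]) ^ k * b) →
      ∀ f : LaurentSeries E, σ (g * h) f = σ g (σ h f))
    (hρmul : ∀ g h : ℤ_[p]ˣ, (∃ b, (g : ℤ_[p]) = 1 + (p : ℤ_[p]) ^ k * b) →
      (∃ b, (h : ℤ_[p]) = 1 + (p : ℤ_[p]) ^ k * b) →
      ∀ x : M, ρ (g * h) x = ρ g (ρ h x))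
    (hσX : ∀ g : ℤ_[p]ˣ, (∃ b, (g : ℤ_[p]) = 1 + (p : ℤ_[p]) ^ k * b) →
      σ g (HahnSeries.ofPowerSeries ℤ E X) =
        HahnSeries.ofPowerSeries ℤ E (onePlusXPow p E (g : ℤ_[p]) - 1))
    (hσiso : ∀ g : ℤ_[p]ˣ, (∃ b, (g : ℤ_[p]) = 1 + (p : ℤ_[p]) ^ k * b) →
      ∀ f : LaurentSeries E, latval (σ g f) = latval f)
    (hsemi : ∀ g : ℤ_[p]ˣ, (∃ b, (g : ℤ_[p]) = 1 + (p : ℤ_[p]) ^ k * b) →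
      ∀ (c : LaurentSeries E) (x : M), ρ g (c • x) = σ g c • ρ g x)
    -- continuity of the action map `Γ_k × M → M`
    (hcont : ∀ (g₀ : ℤ_[p]ˣ), (∃ b, (g₀ : ℤ_[p]) = 1 + (p : ℤ_[p]) ^ k * b) →
      ∀ (x₀ : M) (N : ℝ), ∃ (i : ℕ) (δ : ℝ), ∀ (g : ℤ_[p]ˣ) (x : M),
        (∃ b, (g : ℤ_[p]) = 1 + (p : ℤ_[p]) ^ k * b) →
        (∃ b, (g : ℤ_[p]) = (g₀ : ℤ_[p]) * (1 + (p : ℤ_[p]) ^ (k + i) * b)) →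
        (δ : EReal) ≤ basval e (x - x₀) →
        (N : EReal) ≤ basval e (ρ g x - ρ g₀ x₀)) :
    ∃ (r : ℕ) (gen : Fin r → M),
      Submodule.span (LaurentSeries E) (Set.range gen) = ⊤ ∧
      ∀ (γ : ℤ_[p]ˣ), (∃ b, (γ : ℤ_[p]) = 1 + (p : ℤ_[p]) ^ k * b) →
        ∀ x : M, (∃ c : Fin r → PowerSeries E,
            x = ∑ i, HahnSeries.ofPowerSeries ℤ E (c i) • gen i) →
          ∃ c : Fin r → PowerSeries E,
            ρ γ x = ∑ i, HahnSeries.ofPowerSeries ℤ E (c i) • gen i :=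
  exists_stable_lattice_general d e k σ ρ hρmul hσiso hsemi hcont
end
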